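/- arXiv:1512.05908 — 6 statements merged into one kernel-verified Lean document; each statement's English description precedes it below -/
import Mathlib

section
/- Let q ≥ 2, n ≥ 1 and e ≥ 0 be integers. There exists a perfect e-code C ⊆ Z_q^n with at least two elements if and only if q = (2e+1)·t for some integer t > 1. Moreover, when q = (2e+1)·t with t > 1, such a code can be chosen to be an additive subgroup of Z_q^n. -/
/-- Lee distance on `ZMod q`. -/
def leeDist {q : ℕ} (x y : ZMod q) : ℕ := min (x - y).val (q - (x - y).val)

/-- Maximum (Chebyshev) distance on `(ZMod q)^n`. -/
def maxDist {q n : ℕ} (x y : Fin n → ZMod q) : ℕ :=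
  Finset.univ.sup fun i => leeDist (x i) (y i)

/-- `C` is a perfect `e`-code: every point is within distance `e` of exactly one codeword. -/
def IsPerfectCode {q n : ℕ} (e : ℕ) (C : Set (Fin n → ZMod q)) : Prop :=
  ∀ x : Fin n → ZMod q, ∃! c, c ∈ C ∧ maxDist x c ≤ e

namespace LeeAux

/-- Lee norm of `z`. -/
def N {q : ℕ} (z : ZMod q) : ℕ := min z.val (q - z.val)

lemma leeDist_eq {q : ℕ} (x y : ZMod q) : leeDist x y = N (x - y) := rfl

lemma N_neg {q : ℕ} [NeZero q] (u : ZMod q) : N (-u) = N u := by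
  rcases eq_or_ne u 0 with rfl | h
  · simp
  · have h1 : (-u).val = q - u.val := by rw [ZMod.neg_val, if_neg h]
    have h2 := ZMod.val_lt u
    have h3 : u.val ≠ 0 := by simpa [ZMod.val_eq_zero] using h
    unfold N
    omega

lemma N_subadd {q : ℕ} [NeZero q] (a b : ZMod q) : N (a + b) ≤ N a + N b := by
  have h := ZMod.val_add a b
  have ha := ZMod.val_lt a
  have hb := ZMod.val_lt b
  have hq : 0 < q := NeZero.pos q
  have hcase : (a + b).val = a.val + b.val ∨
      (q ≤ a.val + b.val ∧ (a + b).val = a.val + b.val - q) := by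
    rcases lt_or_ge (a.val + b.val) q with h' | h'
    · left; rw [h, Nat.mod_eq_of_lt h']
    · right
      refine ⟨h', ?_⟩
      rw [h, Nat.mod_eq_sub_mod h', Nat.mod_eq_of_lt (by omega)]
  unfold N
  omega

lemma dvd_val_neg {q : ℕ} [NeZero q] {k : ℕ} (hk : k ∣ q) {b : ZMod q}
    (hb : k ∣ b.val) : k ∣ (-b).val := by
  rw [ZMod.neg_val]
  split
  · simp
  · exact Nat.dvd_sub hk hb

lemma dvd_val_add {q : ℕ} [NeZero q] {k : ℕ} (hk : k ∣ q) {a b : ZMod q}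
    (ha : k ∣ a.val) (hb : k ∣ b.val) : k ∣ (a + b).val := by
  rw [ZMod.val_add]
  exact (Nat.dvd_mod_iff hk).mpr (Nat.dvd_add ha hb)

lemma dvd_val_sub {q : ℕ} [NeZero q] {k : ℕ} (hk : k ∣ q) {a b : ZMod q}
    (ha : k ∣ a.val) (hb : k ∣ b.val) : k ∣ (a - b).val := by
  rw [sub_eq_add_neg]
  exact dvd_val_add hk ha (dvd_val_neg hk hb)

/-- One-dimensional perfect code property of the multiples of `2e+1`. -/
lemma oneD {q e t : ℕ} (ht : 1 < t) (hqe : q = (2 * e + 1) * t) (z : ZMod q) :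
    ∃! d : ZMod q, (2 * e + 1) ∣ d.val ∧ leeDist z d ≤ e := by
  have hq0 : q ≠ 0 := by rw [hqe]; positivity
  haveI : NeZero q := ⟨hq0⟩
  have hqbig : 2 * (2 * e + 1) ≤ q := by
    rw [hqe]; nlinarith
  have hdvdq : (2 * e + 1) ∣ q := ⟨t, hqe⟩
  set v := z.val with hv
  have hvq : v < q := ZMod.val_lt z
  set a := (v + e) / (2 * e + 1) with hadef
  set m := (2 * e + 1) * a with hmdef
  have h1 : m + (v + e) % (2 * e + 1) = v + e := by
    rw [hmdef, hadef]; exact Nat.div_add_mod _ _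
  have h2 : (v + e) % (2 * e + 1) < 2 * e + 1 := Nat.mod_lt _ (by omega)
  have hm1 : m ≤ v + e := by omega
  have hm2 : v ≤ m + e := by omega
  have hmq : m ≤ q := by
    by_contra hcon
    push_neg at hcon
    have hta : t < a := by
      have h3 : (2 * e + 1) * t < (2 * e + 1) * a := by omega
      exact Nat.lt_of_mul_lt_mul_left h3
    have h5 : (2 * e + 1) * (t + 1) ≤ (2 * e + 1) * a := Nat.mul_le_mul_left _ (by omega)
    have h6 : (2 * e + 1) * (t + 1) = (2 * e + 1) * t + (2 * e + 1) := by ring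
    omega
  refine ⟨((m : ℕ) : ZMod q), ⟨?_, ?_⟩, ?_⟩
  · -- divisibility of val
    rw [ZMod.val_natCast]
    exact (Nat.dvd_mod_iff hdvdq).mpr ⟨a, rfl⟩
  · -- distance bound
    rcases le_or_gt m v with hle | hlt
    · have hz : z - (m : ZMod q) = ((v - m : ℕ) : ZMod q) := by
        have hzc : ((v : ℕ) : ZMod q) = z := ZMod.natCast_rightInverse z
        rw [← hzc]
        push_cast [Nat.cast_sub hle]
        ring
      rw [leeDist_eq, hz]
      have : ((v - m : ℕ) : ZMod q).val = v - m := ZMod.val_cast_of_lt (by omega)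
      unfold N
      omega
    · have hz : (m : ZMod q) - z = ((m - v : ℕ) : ZMod q) := by
        have hzc : ((v : ℕ) : ZMod q) = z := ZMod.natCast_rightInverse z
        rw [← hzc]
        push_cast [Nat.cast_sub (le_of_lt hlt)]
        ring
      rw [leeDist_eq, show z - (m : ZMod q) = -((m : ZMod q) - z) by ring, N_neg, hz]
      have : ((m - v : ℕ) : ZMod q).val = m - v := ZMod.val_cast_of_lt (by omega)
      unfold N
      omega
  · -- uniqueness
    rintro d ⟨hd1, hd2⟩
    have hm' : (2 * e + 1) ∣ ((m : ℕ) : ZMod q).val := by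
      rw [ZMod.val_natCast]
      exact (Nat.dvd_mod_iff hdvdq).mpr ⟨a, rfl⟩
    have hmd : leeDist z ((m : ℕ) : ZMod q) ≤ e := by
      -- same as above; reprove
      rcases le_or_gt m v with hle | hlt
      · have hz : z - (m : ZMod q) = ((v - m : ℕ) : ZMod q) := by
          have hzc : ((v : ℕ) : ZMod q) = z := ZMod.natCast_rightInverse z
          rw [← hzc]
          push_cast [Nat.cast_sub hle]
          ring
        rw [leeDist_eq, hz]
        have : ((v - m : ℕ) : ZMod q).val = v - m := ZMod.val_cast_of_lt (by omega)
        unfold N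
        omega
      · have hz : (m : ZMod q) - z = ((m - v : ℕ) : ZMod q) := by
          have hzc : ((v : ℕ) : ZMod q) = z := ZMod.natCast_rightInverse z
          rw [← hzc]
          push_cast [Nat.cast_sub (le_of_lt hlt)]
          ring
        rw [leeDist_eq, show z - (m : ZMod q) = -((m : ZMod q) - z) by ring, N_neg, hz]
        have : ((m - v : ℕ) : ZMod q).val = m - v := ZMod.val_cast_of_lt (by omega)
        unfold N
        omega
    set w : ZMod q := d - ((m : ℕ) : ZMod q) with hwdef
    have hwdvd : (2 * e + 1) ∣ w.val := dvd_val_sub hdvdq hd1 hm'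
    have hwkey : N w ≤ 2 * e := by
      have hrw : w = (z - ((m : ℕ) : ZMod q)) + -(z - d) := by rw [hwdef]; ring
      calc N w ≤ N (z - ((m : ℕ) : ZMod q)) + N (-(z - d)) := by rw [hrw]; exact N_subadd _ _
        _ = N (z - ((m : ℕ) : ZMod q)) + N (z - d) := by rw [N_neg]
        _ ≤ e + e := by
            rw [leeDist_eq] at hd2 hmd
            omega
        _ ≤ 2 * e := by omega
    have hwq : w.val < q := ZMod.val_lt w
    have hq2 : (2 * e + 1) ∣ (q - w.val) := Nat.dvd_sub hdvdq hwdvd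
    have hw1 : w.val = 0 ∨ 2 * e + 1 ≤ w.val := by
      rcases Nat.eq_zero_or_pos w.val with h | h
      · exact Or.inl h
      · exact Or.inr (Nat.le_of_dvd h hwdvd)
    have hw2 : 2 * e + 1 ≤ q - w.val := Nat.le_of_dvd (by omega) hq2
    have : w.val = 0 := by unfold N at hwkey; omega
    have hw0 : w = 0 := (ZMod.val_eq_zero w).mp this
    rw [hwdef] at hw0
    exact sub_eq_zero.mp hw0

/-- The code subgroup. -/
def codeC (q n e : ℕ) [NeZero q] (h : (2 * e + 1) ∣ q) : AddSubgroup (Fin n → ZMod q) where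
  carrier := {x | ∀ i, (2 * e + 1) ∣ (x i).val}
  zero_mem' := by intro i; simp
  add_mem' := by
    intro x y hx hy i
    exact dvd_val_add h (hx i) (hy i)
  neg_mem' := by
    intro x hx i
    exact dvd_val_neg h (hx i)

lemma mem_codeC {q n e : ℕ} [NeZero q] (h : (2 * e + 1) ∣ q) (x : Fin n → ZMod q) :
    x ∈ codeC q n e h ↔ ∀ i, (2 * e + 1) ∣ (x i).val := Iff.rfl

lemma codeC_perfect {q n e t : ℕ} [NeZero q] (ht : 1 < t) (hqe : q = (2 * e + 1) * t) :
    IsPerfectCode e ((codeC q n e ⟨t, hqe⟩ : AddSubgroup (Fin n → ZMod q)) :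
      Set (Fin n → ZMod q)) := by
  intro x
  have H := fun i => oneD ht hqe (x i)
  choose c hc1 hc2 using fun i => (H i).exists
  have huniq : ∀ i, ∀ y : ZMod q, (2 * e + 1) ∣ y.val ∧ leeDist (x i) y ≤ e → y = c i := by
    intro i y hy
    exact (H i).unique hy ⟨hc1 i, hc2 i⟩
  refine ⟨c, ⟨fun i => hc1 i, ?_⟩, ?_⟩
  · unfold maxDist
    exact Finset.sup_le fun i _ => hc2 i
  · rintro c' ⟨hmem, hle⟩
    funext i
    refine huniq i (c' i) ⟨hmem i, ?_⟩
    have hb : leeDist (x i) (c' i) ≤ maxDist x c' := by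
      unfold maxDist
      exact Finset.le_sup (f := fun j => leeDist (x j) (c' j)) (Finset.mem_univ i)
    exact le_trans hb hle

/-- Cardinality of a 1-dimensional Lee ball. -/
lemma ball1_card {q e : ℕ} [NeZero q] (h : 2 * e + 1 ≤ q) (c : ZMod q) :
    (Finset.univ.filter fun y : ZMod q => leeDist y c ≤ e).card = 2 * e + 1 := by
  classical
  have hq : 0 < q := NeZero.pos q
  -- centered ball
  have hcent : (Finset.univ.filter fun z : ZMod q => N z ≤ e) =
      (Finset.range (2 * e + 1)).image
        (fun j : ℕ => ((j : ZMod q) - ((e : ℕ) : ZMod q))) := by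
    ext z
    simp only [Finset.mem_filter, Finset.mem_univ, true_and, Finset.mem_image,
      Finset.mem_range]
    constructor
    · intro hz
      have hvq := ZMod.val_lt z
      have hzc : ((z.val : ℕ) : ZMod q) = z := ZMod.natCast_rightInverse z
      unfold N at hz
      rcases le_or_gt z.val e with hle | hlt
      · refine ⟨z.val + e, by omega, ?_⟩
        rw [show ((z.val + e : ℕ) : ZMod q) - ((e : ℕ) : ZMod q)
            = ((z.val : ℕ) : ZMod q) by push_cast; ring, hzc]
      · have hqe' : q - z.val ≤ e := by omega
        refine ⟨e - (q - z.val), by omega, ?_⟩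
        have key : ((e - (q - z.val) + q - e : ℕ) : ZMod q)
            = ((e - (q - z.val) : ℕ) : ZMod q) - ((e : ℕ) : ZMod q) := by
          have h1 : e ≤ e - (q - z.val) + q := by omega
          rw [show e - (q - z.val) + q - e = e - (q - z.val) + q - e from rfl]
          push_cast [Nat.cast_sub h1]
          simp [ZMod.natCast_self]
        rw [← key, show e - (q - z.val) + q - e = z.val by omega, hzc]
    · rintro ⟨j, hj, rfl⟩
      have key : ((j + q - e : ℕ) : ZMod q) = ((j : ℕ) : ZMod q) - ((e : ℕ) : ZMod q) := by
        have h1 : e ≤ j + q := by omega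
        push_cast [Nat.cast_sub h1]
        simp [ZMod.natCast_self]
      rw [← key]
      rcases le_or_gt e j with hle | hlt
      · have : ((j + q - e : ℕ) : ZMod q).val = j - e := by
          rw [show j + q - e = (j - e) + q by omega]
          rw [show (((j - e) + q : ℕ) : ZMod q) = ((j - e : ℕ) : ZMod q) by
            push_cast; simp [ZMod.natCast_self]]
          exact ZMod.val_cast_of_lt (by omega)
        unfold N
        omega
      · have : ((j + q - e : ℕ) : ZMod q).val = q - (e - j) := by
          rw [show j + q - e = q - (e - j) by omega]
          exact ZMod.val_cast_of_lt (by omega)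
        unfold N
        omega
  have hinj : Set.InjOn (fun j : ℕ => ((j : ZMod q) - ((e : ℕ) : ZMod q)))
      (Finset.range (2 * e + 1)) := by
    intro j1 hj1 j2 hj2 hval
    simp only [Finset.coe_range, Set.mem_Iio] at hj1 hj2
    have : ((j1 : ℕ) : ZMod q) = ((j2 : ℕ) : ZMod q) := by
      have := sub_left_injective hval
      exact this
    have h1 : ((j1 : ℕ) : ZMod q).val = j1 := ZMod.val_cast_of_lt (by omega)
    have h2 : ((j2 : ℕ) : ZMod q).val = j2 := ZMod.val_cast_of_lt (by omega)
    rw [← h1, ← h2, this]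
  have hcentcard : (Finset.univ.filter fun z : ZMod q => N z ≤ e).card = 2 * e + 1 := by
    rw [hcent, Finset.card_image_of_injOn hinj, Finset.card_range]
  -- translate
  have htrans : (Finset.univ.filter fun y : ZMod q => leeDist y c ≤ e) =
      (Finset.univ.filter fun z : ZMod q => N z ≤ e).image (· + c) := by
    ext y
    simp only [Finset.mem_filter, Finset.mem_univ, true_and, Finset.mem_image]
    constructor
    · intro hy
      exact ⟨y - c, by rw [leeDist_eq] at hy; exact hy, by ring⟩
    · rintro ⟨z, hz, rfl⟩
      rw [leeDist_eq, add_sub_cancel_right]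
      exact hz
  rw [htrans, Finset.card_image_of_injective _ (add_left_injective c), hcentcard]

/-- Cardinality of an `n`-dimensional Chebyshev ball. -/
lemma balln_card {q n e : ℕ} [NeZero q] (h : 2 * e + 1 ≤ q) (c : Fin n → ZMod q) :
    (Finset.univ.filter fun x : Fin n → ZMod q => maxDist x c ≤ e).card
      = (2 * e + 1) ^ n := by
  classical
  have hiff : ∀ x : Fin n → ZMod q, maxDist x c ≤ e ↔ ∀ i, leeDist (x i) (c i) ≤ e := by
    intro x
    unfold maxDist
    rw [Finset.sup_le_iff]
    simp
  rw [Finset.filter_congr (fun x _ => by rw [hiff x])]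
  rw [← Fintype.card_subtype]
  rw [Fintype.card_congr (Equiv.subtypePiEquivPi (p := fun i y => leeDist y (c i) ≤ e))]
  rw [Fintype.card_pi]
  have : ∀ i, Fintype.card {y : ZMod q // leeDist y (c i) ≤ e} = 2 * e + 1 := by
    intro i
    rw [Fintype.card_subtype, ball1_card h]
  simp only [this]
  simp

end LeeAux

open LeeAux in
/-- Existence of perfect `e`-codes in `(ZMod q)^n` with at least two elements:
they exist iff `q = (2e+1)·t` for some `t > 1`, and in that case one can be
chosen to be an additive subgroup. -/
theorem stmt0 (q n e : ℕ) (hq : 2 ≤ q) (hn : 1 ≤ n) :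
    ((∃ C : Set (Fin n → ZMod q), IsPerfectCode e C ∧ C.Nontrivial) ↔
      ∃ t : ℕ, 1 < t ∧ q = (2 * e + 1) * t) ∧
    ((∃ t : ℕ, 1 < t ∧ q = (2 * e + 1) * t) →
      ∃ C : AddSubgroup (Fin n → ZMod q),
        IsPerfectCode e (C : Set (Fin n → ZMod q)) ∧
        (C : Set (Fin n → ZMod q)).Nontrivial) := by
  classical
  haveI : NeZero q := ⟨by omega⟩
  have construction : (∃ t : ℕ, 1 < t ∧ q = (2 * e + 1) * t) →
      ∃ C : AddSubgroup (Fin n → ZMod q),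
        IsPerfectCode e (C : Set (Fin n → ZMod q)) ∧
        (C : Set (Fin n → ZMod q)).Nontrivial := by
    rintro ⟨t, ht, hqe⟩
    refine ⟨codeC q n e ⟨t, hqe⟩, codeC_perfect ht hqe, ?_⟩
    have hlt : 2 * e + 1 < q := by
      rw [hqe]; nlinarith
    refine ⟨(fun _ => ((2 * e + 1 : ℕ) : ZMod q)), ?_, 0, ?_, ?_⟩
    · intro i
      rw [ZMod.val_cast_of_lt hlt]
    · exact (codeC q n e ⟨t, hqe⟩).zero_mem
    · intro hcon
      have := congrFun hcon ⟨0, hn⟩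
      have hval := congrArg ZMod.val this
      rw [ZMod.val_cast_of_lt hlt] at hval
      simp at hval
  refine ⟨⟨?_, fun h => ?_⟩, construction⟩
  · rintro ⟨C, hC, hnt⟩
    -- step 1 : 2e+1 ≤ q
    have hle : 2 * e + 1 ≤ q := by
      by_contra hcon
      push_neg at hcon
      obtain ⟨a, ha, b, hb, hab⟩ := hnt
      have hall : ∀ y x : ZMod q, leeDist x y ≤ e := by
        intro y x
        have := ZMod.val_lt (x - y)
        rw [leeDist_eq]
        unfold LeeAux.N
        omega
      obtain ⟨c, _, hun⟩ := hC a
      have h1 : a = c := hun a ⟨ha, Finset.sup_le fun i _ => hall _ _⟩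
      have h2 : b = c := hun b ⟨hb, Finset.sup_le fun i _ => hall _ _⟩
      exact hab (h1.trans h2.symm)
    -- counting
    set S : Finset (Fin n → ZMod q) := (Set.toFinite C).toFinset with hS
    have hmemS : ∀ x, x ∈ S ↔ x ∈ C := fun x => (Set.toFinite C).mem_toFinset
    set ball : (Fin n → ZMod q) → Finset (Fin n → ZMod q) :=
      fun c => Finset.univ.filter fun x => maxDist x c ≤ e with hball
    have hcov : (Finset.univ : Finset (Fin n → ZMod q)) = S.biUnion ball := by
      ext x
      simp only [Finset.mem_univ, true_iff, true_and, Finset.mem_biUnion, hball,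
        Finset.mem_filter]
      obtain ⟨c, ⟨hc1, hc2⟩, _⟩ := hC x
      exact ⟨c, (hmemS c).mpr hc1, hc2⟩
    have hdisj : ∀ c1 ∈ S, ∀ c2 ∈ S, c1 ≠ c2 → Disjoint (ball c1) (ball c2) := by
      intro c1 h1 c2 h2 hne
      rw [Finset.disjoint_left]
      intro x hx1 hx2
      simp only [hball, Finset.mem_filter] at hx1 hx2
      obtain ⟨c, _, hun⟩ := hC x
      exact hne ((hun c1 ⟨(hmemS c1).mp h1, hx1.2⟩).trans
        (hun c2 ⟨(hmemS c2).mp h2, hx2.2⟩).symm)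
    have hcard : q ^ n = S.card * (2 * e + 1) ^ n := by
      have h0 := congrArg Finset.card hcov
      rw [Finset.card_biUnion hdisj] at h0
      have h1 : ∀ c ∈ S, (ball c).card = (2 * e + 1) ^ n := fun c _ => balln_card hle c
      rw [Finset.sum_congr rfl h1, Finset.sum_const, smul_eq_mul] at h0
      rw [← h0]
      simp [Finset.card_univ, ZMod.card]
    have hScard : 2 ≤ S.card := by
      obtain ⟨a, ha, b, hb, hab⟩ := hnt
      exact Finset.one_lt_card.mpr ⟨a, (hmemS a).mpr ha, b, (hmemS b).mpr hb, hab⟩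
    have hdvd : (2 * e + 1) ∣ q := by
      refine (Nat.pow_dvd_pow_iff (by omega : n ≠ 0)).mp ⟨S.card, ?_⟩
      rw [hcard]; ring
    obtain ⟨t, htq⟩ := hdvd
    refine ⟨t, ?_, htq⟩
    by_contra hcon
    push_neg at hcon
    interval_cases t
    · omega
    · have hq' : q = 2 * e + 1 := by omega
      have hpow : q ^ n = (2 * e + 1) ^ n := by rw [hq']
      have hpos : 0 < (2 * e + 1) ^ n := by positivity
      nlinarith [hcard, hScard, hpow, hpos]
  · exact (construction h).elim fun C hC => ⟨(C : Set (Fin n → ZMod q)), hC.1, hC.2⟩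
end

section
/- Let q ≥ 2 and n ≥ 1 be integers. There exist an integer e ≥ 1 and a perfect e-code C ⊆ Z_q^n with at least two elements if and only if q is neither a prime number nor a power of 2. -/
section Aux


section OneD
variable {q p e : ℕ}

lemma cond_iff [NeZero q] (hpq : p ∣ q) (y c : ZMod q) :
    (p ∣ c.val ∧ leeDist y c ≤ e) ↔
      (p ∣ (y.val + q - (y - c).val) ∧
        ((y - c).val ≤ e ∨ q - (y - c).val ≤ e)) := by
  have hq : 0 < q := Nat.pos_of_ne_zero (NeZero.ne q)
  set v := (y - c).val with hv
  have hvq : v < q := ZMod.val_lt _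
  have hv' : ((v : ℕ) : ZMod q) = y - c := ZMod.natCast_rightInverse _
  have hy' : ((y.val : ℕ) : ZMod q) = y := ZMod.natCast_rightInverse _
  have hc : c = ((y.val + q - v : ℕ) : ZMod q) := by
    push_cast [Nat.cast_sub (by omega : v ≤ y.val + q)]
    rw [hv', hy', ZMod.natCast_self]
    ring
  have hcval : c.val = (y.val + q - v) % q := by rw [hc, ZMod.val_natCast]
  have hdvd : p ∣ c.val ↔ p ∣ (y.val + q - v) := by
    rw [hcval]
    have hmd := Nat.mod_add_div (y.val + q - v) q
    constructor
    · intro h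
      have := Nat.dvd_add h (hpq.mul_right ((y.val + q - v) / q))
      rwa [hmd] at this
    · intro h
      have := Nat.dvd_sub h (hpq.mul_right ((y.val + q - v) / q))
      rwa [show y.val + q - v - q * ((y.val + q - v) / q) = (y.val + q - v) % q by omega] at this
  have hlee : leeDist y c ≤ e ↔ (v ≤ e ∨ q - v ≤ e) := by
    rw [leeDist, ← hv]; omega
  tauto

/-- One-dimensional perfect code: multiples of `p` with radius `e` where `p = 2e+1`. -/
lemma oneD (hq2 : 2 ≤ q) (hpq : p ∣ q) (hpe : p = 2 * e + 1) (hlt : p < q) (y : ZMod q) :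
    ∃! c : ZMod q, p ∣ c.val ∧ leeDist y c ≤ e := by
  haveI : NeZero q := ⟨by omega⟩
  have hq : 0 < q := by omega
  have hp : 0 < p := by omega
  set r := y.val % p with hr
  have hrlt : r < p := Nat.mod_lt _ hp
  have hry : p * (y.val / p) + r = y.val := Nat.div_add_mod y.val p
  -- the unique value of v
  set v₀ : ℕ := if r ≤ e then r else q - (p - r) with hv₀
  have hv₀q : v₀ < q := by rw [hv₀]; split <;> omega
  have hv₀dvd : p ∣ (y.val + q - v₀) := by
    rw [hv₀]; split
    · rw [show y.val + q - r = p * (y.val / p) + q by omega]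
      exact Nat.dvd_add (Dvd.intro _ rfl) hpq
    · rw [show y.val + q - (q - (p - r)) = p * (y.val / p) + p by omega]
      exact Nat.dvd_add (Dvd.intro _ rfl) (dvd_refl p)
  have hv₀e : v₀ ≤ e ∨ q - v₀ ≤ e := by rw [hv₀]; split <;> omega
  -- uniqueness at the level of v
  have huniq : ∀ v v' : ℕ, v < q → v' < q → p ∣ (y.val + q - v) → p ∣ (y.val + q - v') →
      (v ≤ e ∨ q - v ≤ e) → (v' ≤ e ∨ q - v' ≤ e) → v = v' := by
    intro v v' hvq hv'q hd hd' he he'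
    rcases le_total v v' with hle | hle
    · have hdd : p ∣ (v' - v) := by
        have := Nat.dvd_sub hd hd'
        rwa [show y.val + q - v - (y.val + q - v') = v' - v by omega] at this
      rcases Nat.eq_zero_or_pos (v' - v) with h0 | h0
      · omega
      · have hple : p ≤ v' - v := Nat.le_of_dvd h0 hdd
        rcases he with h1 | h1 <;> rcases he' with h2 | h2
        · omega
        · -- v ≤ e, q - v' ≤ e : q - (v' - v) ∈ [1, p-1] divisible by p
          have h3 : p ∣ q - (v' - v) := Nat.dvd_sub hpq hdd
          have h4 : p ≤ q - (v' - v) := Nat.le_of_dvd (by omega) h3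
          omega
        · omega
        · omega
    · have hdd : p ∣ (v - v') := by
        have := Nat.dvd_sub hd' hd
        rwa [show y.val + q - v' - (y.val + q - v) = v - v' by omega] at this
      rcases Nat.eq_zero_or_pos (v - v') with h0 | h0
      · omega
      · have hple : p ≤ v - v' := Nat.le_of_dvd h0 hdd
        rcases he with h1 | h1 <;> rcases he' with h2 | h2
        · omega
        · omega
        · have h3 : p ∣ q - (v - v') := Nat.dvd_sub hpq hdd
          have h4 : p ≤ q - (v - v') := Nat.le_of_dvd (by omega) h3
          omega
        · omega
  refine ⟨y - (v₀ : ZMod q), ?_, ?_⟩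
  · show p ∣ (y - (v₀ : ZMod q)).val ∧ leeDist y (y - (v₀ : ZMod q)) ≤ e
    rw [cond_iff hpq]
    have : (y - (y - (v₀ : ZMod q))).val = v₀ := by
      rw [sub_sub_cancel, ZMod.val_natCast, Nat.mod_eq_of_lt hv₀q]
    rw [this]
    exact ⟨hv₀dvd, hv₀e⟩
  · intro c hc
    replace hc : p ∣ c.val ∧ leeDist y c ≤ e := hc
    rw [cond_iff hpq] at hc
    have hveq : (y - c).val = v₀ := huniq _ _ (ZMod.val_lt _) hv₀q hc.1 hv₀dvd hc.2 hv₀e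
    have : ((y - c).val : ZMod q) = (v₀ : ZMod q) := by rw [hveq]
    rw [ZMod.natCast_rightInverse _] at this
    -- y - c = v₀  →  c = y - v₀
    rw [← this]; ring
end OneD
lemma maxDist_le {q n : ℕ} (x y : Fin n → ZMod q) (e : ℕ) :
    maxDist x y ≤ e ↔ ∀ i, leeDist (x i) (y i) ≤ e := by
  rw [maxDist, Finset.sup_le_iff]; simp

lemma backward {q n p e : ℕ} (hq2 : 2 ≤ q) (hn : 1 ≤ n) (hpq : p ∣ q)
    (hpe : p = 2 * e + 1) (hlt : p < q) (he : 1 ≤ e) :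
    ∃ C : Set (Fin n → ZMod q), IsPerfectCode e C ∧ C.Nontrivial := by
  haveI : NeZero q := ⟨by omega⟩
  refine ⟨{c | ∀ i, p ∣ (c i).val}, ?_, ?_⟩
  · intro x
    have h := fun i => oneD hq2 hpq hpe hlt (x i)
    choose f hf hu using h
    refine ⟨f, ⟨fun i => (hf i).1, (maxDist_le _ _ _).mpr fun i => (hf i).2⟩, ?_⟩
    intro c hc
    have hmd := (maxDist_le _ _ _).mp hc.2
    exact funext fun i => hu i (c i) ⟨hc.1 i, hmd i⟩
  · refine ⟨0, fun i => ?_, (fun _ => (p : ZMod q)), fun i => ?_, ?_⟩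
    · simp [ZMod.val_zero]
    · rw [ZMod.val_natCast, Nat.mod_eq_of_lt hlt]
    · intro h
      have h0 := congrFun h ⟨0, by omega⟩
      rw [Pi.zero_apply] at h0
      have hval : ((p : ZMod q)).val = p := by rw [ZMod.val_natCast, Nat.mod_eq_of_lt hlt]
      rw [← h0, ZMod.val_zero] at hval
      omega

lemma leeDist_self {q : ℕ} [NeZero q] (x : ZMod q) : leeDist x x = 0 := by
  simp [leeDist]

lemma ball0_card {q e : ℕ} [NeZero q] (h : 2 * e + 1 ≤ q) :
    (Finset.univ.filter (fun z : ZMod q => z.val ≤ e ∨ q - z.val ≤ e)).card = 2 * e + 1 := by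
  have hq : 0 < q := Nat.pos_of_ne_zero (NeZero.ne q)
  rw [Finset.card_bij' (i := fun z _ => z.val)
      (j := fun v _ => ((v : ℕ) : ZMod q))
      (hi := ?_) (hj := ?_) (left_inv := ?_) (right_inv := ?_)
      (t := Finset.range (e+1) ∪ Finset.Ico (q-e) q)]
  · rw [Finset.card_union_of_disjoint, Finset.card_range, Nat.card_Ico]
    · omega
    · rw [Finset.disjoint_left]
      intro a ha ha'
      simp only [Finset.mem_range, Finset.mem_Ico] at ha ha'
      omega
  · intro z hz
    simp only [Finset.mem_filter, Finset.mem_univ, true_and] at hz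
    have := ZMod.val_lt z
    simp only [Finset.mem_union, Finset.mem_range, Finset.mem_Ico]
    omega
  · intro v hv
    simp only [Finset.mem_union, Finset.mem_range, Finset.mem_Ico] at hv
    simp only [Finset.mem_filter, Finset.mem_univ, true_and]
    rw [ZMod.val_natCast, Nat.mod_eq_of_lt (by omega)]
    omega
  · intro z _
    exact ZMod.natCast_rightInverse z
  · intro v hv
    simp only [Finset.mem_union, Finset.mem_range, Finset.mem_Ico] at hv
    show ((v : ZMod q)).val = v
    rw [ZMod.val_natCast, Nat.mod_eq_of_lt (by omega)]

lemma ball1_card {q e : ℕ} [NeZero q] (h : 2 * e + 1 ≤ q) (c : ZMod q) :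
    (Finset.univ.filter (fun z : ZMod q => leeDist z c ≤ e)).card = 2 * e + 1 := by
  rw [← ball0_card h (e := e)]
  apply Finset.card_bij' (i := fun z _ => z - c) (j := fun w _ => w + c)
  · intro z hz
    simp only [Finset.mem_filter, Finset.mem_univ, true_and] at hz ⊢
    rw [leeDist] at hz
    omega
  · intro w hw
    simp only [Finset.mem_filter, Finset.mem_univ, true_and] at hw ⊢
    rw [leeDist]
    simp only [add_sub_cancel_right]
    omega
  · intro z _; ring
  · intro w _; ring

lemma ballN_card {q n e : ℕ} [NeZero q] (h : 2 * e + 1 ≤ q) (c : Fin n → ZMod q) :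
    (Finset.univ.filter (fun x : Fin n → ZMod q => maxDist x c ≤ e)).card = (2*e+1)^n := by
  have : (Finset.univ.filter (fun x : Fin n → ZMod q => maxDist x c ≤ e)) =
      Fintype.piFinset (fun i => Finset.univ.filter (fun z : ZMod q => leeDist z (c i) ≤ e)) := by
    ext x
    simp [Fintype.mem_piFinset, maxDist_le]
  rw [this, Fintype.card_piFinset]
  simp [ball1_card h]

lemma forward_dvd {q n e : ℕ} {C : Set (Fin n → ZMod q)} (hq2 : 2 ≤ q) (hn : 1 ≤ n)
    (hC : IsPerfectCode e C) (hnt : C.Nontrivial) :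
    (2 * e + 1) ∣ q ∧ 2 * e + 1 < q := by
  haveI : NeZero q := ⟨by omega⟩
  -- Step A : 2e+1 < q
  obtain ⟨c₁, hc₁, c₂, hc₂, hne⟩ := hnt
  have hd0 : maxDist c₁ c₁ ≤ e := by
    rw [maxDist_le]; intro i; rw [leeDist_self]; omega
  have hlt : 2 * e + 1 < q := by
    have hu := (hC c₁).unique (y₁ := c₂) (y₂ := c₁)
    have hnd : ¬ maxDist c₁ c₂ ≤ e := fun hd => hne (hu ⟨hc₂, hd⟩ ⟨hc₁, hd0⟩).symm
    rw [maxDist_le] at hnd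
    push_neg at hnd
    obtain ⟨i, hi⟩ := hnd
    rw [leeDist] at hi
    have := ZMod.val_lt (c₁ i - c₂ i)
    omega
  refine ⟨?_, hlt⟩
  -- Step B : counting
  classical
  set F := (Set.toFinite C).toFinset with hF
  have hmem : ∀ x, x ∈ F ↔ x ∈ C := fun x => Set.Finite.mem_toFinset _
  have hcard : (Finset.univ : Finset (Fin n → ZMod q)).card = q ^ n := by
    simp [Finset.card_univ, ZMod.card]
  have hfib := Finset.card_eq_sum_card_fiberwise
    (f := fun x => (hC x).choose) (s := Finset.univ) (t := F)
    (fun x _ => (hmem _).mpr ((hC x).choose_spec.1.1))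
  have hfe : ∀ c ∈ F, (Finset.univ.filter (fun x => (hC x).choose = c)).card = (2*e+1)^n := by
    intro c hc
    rw [← ballN_card (le_of_lt hlt) c]
    congr 1
    ext x
    simp only [Finset.mem_filter, Finset.mem_univ, true_and]
    constructor
    · intro h; rw [← h]; exact (hC x).choose_spec.1.2
    · intro h; exact ((hC x).choose_spec.2 c ⟨(hmem _).mp hc, h⟩).symm
  rw [Finset.sum_congr rfl hfe, Finset.sum_const, smul_eq_mul, hcard] at hfib
  have hdvdn : (2*e+1)^n ∣ q^n := ⟨F.card, by rw [hfib, mul_comm]⟩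
  exact (Nat.pow_dvd_pow_iff (by omega)).mp hdvdn

lemma exists_odd_prime_dvd {q : ℕ} (hq : 2 ≤ q) (h : ¬ ∃ k : ℕ, q = 2 ^ k) :
    ∃ p : ℕ, p.Prime ∧ p ∣ q ∧ p % 2 = 1 := by
  by_contra hc
  push_neg at hc
  have h2 : ∀ {d : ℕ}, d.Prime → d ∣ q → d = 2 := by
    intro d hd hdq
    have := hc d hd hdq
    have h2 := hd.two_le
    rcases Nat.Prime.eq_two_or_odd hd with h | h
    · exact h
    · omega
  exact h ⟨_, Nat.eq_prime_pow_of_unique_prime_dvd (by omega) h2⟩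

end Aux

/-- There is a perfect `e`-code (`e ≥ 1`) in `(ZMod q)^n` with at least two elements
iff `q` is neither a prime nor a power of 2. -/
theorem stmt1 (q n : ℕ) (hq : 2 ≤ q) (hn : 1 ≤ n) :
    (∃ e : ℕ, 1 ≤ e ∧ ∃ C : Set (Fin n → ZMod q), IsPerfectCode e C ∧ C.Nontrivial) ↔
    (¬ q.Prime ∧ ¬ ∃ k : ℕ, q = 2 ^ k) := by
  constructor
  · rintro ⟨e, he, C, hC, hnt⟩
    obtain ⟨hdvd, hlt⟩ := forward_dvd hq hn hC hnt
    constructor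
    · intro hp
      rcases (hp.eq_one_or_self_of_dvd _ hdvd) with h | h <;> omega
    · rintro ⟨k, rfl⟩
      obtain ⟨j, hj, hdj⟩ := (Nat.dvd_prime_pow Nat.prime_two).mp hdvd
      rcases Nat.eq_zero_or_pos j with rfl | hj0
      · simp at hdj; omega
      · have h2 : 2 ∣ 2 ^ j := dvd_pow_self 2 (by omega)
        rw [← hdj] at h2
        omega
  · rintro ⟨hnp, hnpow⟩
    obtain ⟨p, hp, hpq, hodd⟩ := exists_odd_prime_dvd hq hnpow
    have hp2 : 2 ≤ p := hp.two_le
    have hp3 : 3 ≤ p := by omega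
    have hpne : p ≠ q := fun h => hnp (h ▸ hp)
    have hplt : p < q := lt_of_le_of_ne (Nat.le_of_dvd (by omega) hpq) hpne
    refine ⟨(p - 1) / 2, by omega, ?_⟩
    exact backward hq hn hpq (by omega) hplt (by omega)
end

section
/- Let q = (2e+1)·t with integers e ≥ 0 and t ≥ 2. Every perfect e-code C ⊆ Z_q^2 is equal to C1(a,h) or to C2(a,h) for some a ∈ Z_q and some function h : {0,…,t−1} → Z_q. -/
namespace PC

variable {e q : ℕ}

lemma val_one' (hq : 1 < q) : (1 : ZMod q).val = 1 := by
  haveI : NeZero q := ⟨by omega⟩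
  rw [← Nat.cast_one, ZMod.val_natCast, Nat.mod_eq_of_lt hq]

lemma lee_iff (hq2 : 2*(2*e+1) ≤ q) (x c : ZMod q) :
    leeDist x c ≤ e ↔ (x - c + (e : ZMod q)).val < 2*e+1 := by
  haveI : NeZero q := ⟨by omega⟩
  unfold leeDist
  have hv : (x - c).val < q := ZMod.val_lt _
  have he : ((e : ZMod q)).val = e := by
    rw [ZMod.val_natCast, Nat.mod_eq_of_lt (by omega)]
  rw [ZMod.val_add, he]
  set v := (x - c).val with hvdef
  rcases Nat.lt_or_ge (v + e) q with h | h
  · rw [Nat.mod_eq_of_lt h]; omega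
  · have h2 : (v + e) % q = v + e - q := by
      rw [Nat.mod_eq_sub_mod h, Nat.mod_eq_of_lt (by omega)]
    rw [h2]; omega

lemma off_spec [NeZero q] (c x : ZMod q) :
    x - c + (e : ZMod q) = (((x - c + (e : ZMod q)).val : ℕ) : ZMod q) := by
  simp [ZMod.natCast_val, ZMod.cast_id]

lemma off_succ [NeZero q] (hq : 1 < q) (c x : ZMod q) :
    (x + 1 - c + (e : ZMod q)).val = ((x - c + (e : ZMod q)).val + 1) % q := by
  have h : x + 1 - c + (e : ZMod q) = (x - c + (e : ZMod q)) + 1 := by ring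
  rw [h, ZMod.val_add, val_one' hq]

lemma off_self (hq2 : 2*(2*e+1) ≤ q) (c : ZMod q) :
    (c - c + (e : ZMod q)).val < 2*e+1 := by
  haveI : NeZero q := ⟨by omega⟩
  have he : ((e : ZMod q)).val = e := by
    rw [ZMod.val_natCast, Nat.mod_eq_of_lt (by omega)]
  simp only [sub_self, zero_add, he]
  omega

lemma reach [NeZero q] (x x' : ZMod q) : ∃ n : ℕ, x' = x + (n : ZMod q) := by
  refine ⟨(x' - x).val, ?_⟩
  rw [ZMod.natCast_val, ZMod.cast_id]; ring

lemma zmodInd [NeZero q] (P : ZMod q → Prop) (x₀ : ZMod q) (h0 : P x₀)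
    (hs : ∀ x, P x → P (x + 1)) : ∀ x, P x := by
  intro x
  obtain ⟨n, rfl⟩ := reach x₀ x
  induction n with
  | zero => simpa using h0
  | succ n ih =>
      have : x₀ + ((n+1 : ℕ) : ZMod q) = (x₀ + (n : ZMod q)) + 1 := by push_cast; ring
      rw [this]; exact hs _ ih

lemma aligned_exact (hq2 : 2*(2*e+1) ≤ q)
    (π : ZMod q →+* ZMod (2*e+1)) (hπ : ∀ d : ZMod q, π d = ((d.val : ℕ) : ZMod (2*e+1)))
    (c x : ZMod q) (hcov : (x - c + (e : ZMod q)).val < 2*e+1) (hal : π c = π x) : c = x := by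
  haveI : NeZero q := ⟨by omega⟩
  have h1 : π (x - c + (e : ZMod q)) = ((e : ℕ) : ZMod (2*e+1)) := by
    rw [map_add, map_sub, hal, map_natCast]; ring
  rw [hπ] at h1
  have h2 : (x - c + (e : ZMod q)).val = e := by
    have h3 := (ZMod.natCast_eq_natCast_iff' _ _ _).mp h1
    rwa [Nat.mod_eq_of_lt hcov, Nat.mod_eq_of_lt (by omega)] at h3
  have h3 := off_spec (e := e) c x
  rw [h2] at h3
  have : x - c = 0 := by
    have h4 : x - c + (e : ZMod q) = (e : ZMod q) := h3
    linear_combination h4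
  linear_combination -this

lemma decomp {t : ℕ} (ht : 2 ≤ t) (hq : q = (2*e+1)*t)
    (π : ZMod q →+* ZMod (2*e+1)) (hπ : ∀ d : ZMod q, π d = ((d.val : ℕ) : ZMod (2*e+1)))
    (d : ZMod q) (h : π d = 0) :
    ∃ k : Fin t, d = ((2*e+1 : ℕ) : ZMod q) * ((k : ℕ) : ZMod q) := by
  haveI : NeZero q := ⟨by subst hq; exact Nat.mul_ne_zero (by omega) (by omega)⟩
  haveI : NeZero (2*e+1) := ⟨by omega⟩
  rw [hπ] at h
  obtain ⟨k, hk⟩ := (ZMod.natCast_eq_zero_iff _ _).mp h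
  have hklt : k < t := by
    have h1 : (2*e+1)*k < (2*e+1)*t := by rw [← hk, ← hq]; exact ZMod.val_lt _
    exact Nat.lt_of_mul_lt_mul_left h1
  refine ⟨⟨k, hklt⟩, ?_⟩
  have hd : d = ((d.val : ℕ) : ZMod q) := by simp [ZMod.natCast_val, ZMod.cast_id]
  rw [hd, hk]; push_cast; ring

lemma pi_mul_zero {t : ℕ} (ht : 2 ≤ t) (hq : q = (2*e+1)*t)
    (π : ZMod q →+* ZMod (2*e+1)) (k : ℕ) :
    π (((2*e+1 : ℕ) : ZMod q) * ((k : ℕ) : ZMod q)) = 0 := by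
  rw [map_mul, map_natCast, map_natCast, ZMod.natCast_self, zero_mul]

lemma vecEq {α : Type*} (v : Fin 2 → α) (A B : α) : v = ![A, B] ↔ v 0 = A ∧ v 1 = B := by
  constructor
  · rintro rfl; simp
  · rintro ⟨h0, h1⟩; funext i; fin_cases i <;> simpa


section Main

variable {e t q : ℕ} {C : Set (Fin 2 → ZMod q)}
  {F : ZMod q → ZMod q → (Fin 2 → ZMod q)}

/-- Horizontal step: the square covering `(x+1,y)` is either the same as the one covering
`(x,y)`, or the old one dies (offset `2e`) and the new one starts at `x+1`. -/
lemma stepX (hq2 : 2*(2*e+1) ≤ q)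
    (hmem : ∀ x y, F x y ∈ C)
    (hcov0 : ∀ x y, (x - F x y 0 + (e : ZMod q)).val < 2*e+1)
    (hcov1 : ∀ x y, (y - F x y 1 + (e : ZMod q)).val < 2*e+1)
    (huniq : ∀ x y c, c ∈ C → (x - c 0 + (e : ZMod q)).val < 2*e+1 →
      (y - c 1 + (e : ZMod q)).val < 2*e+1 → c = F x y)
    (x y : ZMod q) :
    F (x+1) y = F x y ∨
      ((x - F x y 0 + (e : ZMod q)).val = 2*e ∧ F (x+1) y 0 = x + 1 + (e : ZMod q)) := by
  haveI : NeZero q := ⟨by omega⟩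
  have hult : (x - F x y 0 + (e : ZMod q)).val < 2*e+1 := hcov0 x y
  by_cases h : (x - F x y 0 + (e : ZMod q)).val + 1 < 2*e+1
  · left
    have hc0 : (x + 1 - F x y 0 + (e : ZMod q)).val < 2*e+1 := by
      rw [off_succ (by omega), Nat.mod_eq_of_lt (by omega)]; exact h
    exact (huniq (x+1) y (F x y) (hmem x y) hc0 (hcov1 x y)).symm
  · right
    have hu2e : (x - F x y 0 + (e : ZMod q)).val = 2*e := by omega
    have h0 : (x + 1 - F (x+1) y 0 + (e : ZMod q)).val = 0 := by
      by_contra h0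
      have hu'lt : (x + 1 - F (x+1) y 0 + (e : ZMod q)).val < 2*e+1 := hcov0 (x+1) y
      have hs := off_succ (e := e) (q := q) (by omega) (F (x+1) y 0) x
      have hlt : (x - F (x+1) y 0 + (e : ZMod q)).val < q := ZMod.val_lt _
      have hox : (x - F (x+1) y 0 + (e : ZMod q)).val
          = (x + 1 - F (x+1) y 0 + (e : ZMod q)).val - 1 := by
        rcases Nat.lt_or_ge ((x - F (x+1) y 0 + (e : ZMod q)).val + 1) q with hlt2 | hge
        · rw [Nat.mod_eq_of_lt hlt2] at hs; omega
        · have hqe : (x - F (x+1) y 0 + (e : ZMod q)).val + 1 = q := by omega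
          rw [hqe, Nat.mod_self] at hs; omega
      have heq := huniq x y (F (x+1) y) (hmem (x+1) y) (by omega) (hcov1 (x+1) y)
      rw [heq] at hox hu'lt h0
      omega
    constructor
    · exact hu2e
    · have hsp := off_spec (e := e) (F (x+1) y 0) (x+1)
      rw [h0] at hsp
      push_cast at hsp
      linear_combination -hsp

/-- The residue of the left edge is constant along a row. -/
lemma rowConst (hq2 : 2*(2*e+1) ≤ q)
    (hmem : ∀ x y, F x y ∈ C)
    (hcov0 : ∀ x y, (x - F x y 0 + (e : ZMod q)).val < 2*e+1)
    (hcov1 : ∀ x y, (y - F x y 1 + (e : ZMod q)).val < 2*e+1)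
    (huniq : ∀ x y c, c ∈ C → (x - c 0 + (e : ZMod q)).val < 2*e+1 →
      (y - c 1 + (e : ZMod q)).val < 2*e+1 → c = F x y)
    (π : ZMod q →+* ZMod (2*e+1)) (hπ : ∀ d : ZMod q, π d = ((d.val : ℕ) : ZMod (2*e+1)))
    (y : ZMod q) : ∀ x, π (F x y 0) = π (F 0 y 0) := by
  haveI : NeZero q := ⟨by omega⟩
  refine zmodInd _ 0 rfl ?_
  intro x ih
  rcases stepX hq2 hmem hcov0 hcov1 huniq x y with h | ⟨h1, h2⟩
  · rw [h]; exact ih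
  · have hsp := off_spec (e := e) (F x y 0) x
    rw [h1] at hsp
    have hc : F (x+1) y 0 = F x y 0 + ((2*e+1 : ℕ) : ZMod q) := by
      rw [h2]; push_cast; push_cast at hsp; linear_combination hsp
    rw [hc, map_add, map_natCast, ZMod.natCast_self, add_zero]
    exact ih


/-- Dichotomy: all codewords are aligned mod `2e+1` in the first or in the second coordinate. -/
lemma dicho (ht : 2 ≤ t) (hq : q = (2*e+1)*t)
    (hmem : ∀ x y, F x y ∈ C)
    (hcov0 : ∀ x y, (x - F x y 0 + (e : ZMod q)).val < 2*e+1)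
    (hcov1 : ∀ x y, (y - F x y 1 + (e : ZMod q)).val < 2*e+1)
    (huniq : ∀ x y c, c ∈ C → (x - c 0 + (e : ZMod q)).val < 2*e+1 →
      (y - c 1 + (e : ZMod q)).val < 2*e+1 → c = F x y)
    (π : ZMod q →+* ZMod (2*e+1)) (hπ : ∀ d : ZMod q, π d = ((d.val : ℕ) : ZMod (2*e+1))) :
    (∃ ρ, ∀ c ∈ C, π (c 0) = ρ) ∨ (∃ ρ, ∀ c ∈ C, π (c 1) = ρ) := by
  have hq2 : 2*(2*e+1) ≤ q := by
    calc 2*(2*e+1) = (2*e+1)*2 := by ring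
      _ ≤ (2*e+1)*t := Nat.mul_le_mul_left _ ht
      _ = q := hq.symm
  haveI : NeZero q := ⟨by omega⟩
  haveI : NeZero (2*e+1) := ⟨by omega⟩
  have hself : ∀ c ∈ C, c = F (c 0) (c 1) :=
    fun c hc => huniq _ _ c hc (off_self hq2 _) (off_self hq2 _)
  by_cases hfd : ∃ r : ZMod q, ∀ x, (r - F x r 1 + (e : ZMod q)).val = 2*e
  · -- full death at some row : second coordinates aligned
    right
    obtain ⟨r₀, hr₀⟩ := hfd
    have hP : ∀ n : ℕ, ∃ M : ℕ, (2*e+1) ∣ M ∧ n ≤ M ∧ M ≤ n + 2*e ∧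
        ∀ x, F x (r₀ + (n : ZMod q)) 1 = r₀ - (e : ZMod q) + ((M : ℕ) : ZMod q) := by
      intro n
      induction n with
      | zero =>
        refine ⟨0, dvd_zero _, le_refl _, by omega, ?_⟩
        intro x
        have hsp := off_spec (e := e) (F x r₀ 1) r₀
        rw [hr₀ x] at hsp
        simp only [Nat.cast_zero, add_zero]
        push_cast at hsp
        linear_combination -hsp
      | succ n ih =>
        obtain ⟨M, hdvd, h1, h2, hval⟩ := ih
        have hY1 : r₀ + ((n+1 : ℕ) : ZMod q) = (r₀ + ((n : ℕ) : ZMod q)) + 1 := by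
          push_cast; ring
        by_cases hM : n + 1 ≤ M
        · refine ⟨M, hdvd, hM, by omega, ?_⟩
          intro x
          have hM2 : M ≤ n + 1 + 2*e := by omega
          have hcY : ((r₀ + ((n : ℕ) : ZMod q)) + 1 - F x (r₀ + ((n : ℕ) : ZMod q)) 1
              + (e : ZMod q)).val < 2*e+1 := by
            have heq2 : (r₀ + ((n : ℕ) : ZMod q)) + 1 - F x (r₀ + ((n : ℕ) : ZMod q)) 1
                + (e : ZMod q) = ((n + 1 + 2*e - M : ℕ) : ZMod q) := by
              rw [hval x, Nat.cast_sub hM2]; push_cast; ring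
            rw [heq2, ZMod.val_cast_of_lt (by omega)]
            omega
          have heq := huniq x ((r₀ + ((n : ℕ) : ZMod q)) + 1) (F x (r₀ + ((n : ℕ) : ZMod q)))
            (hmem _ _) (hcov0 _ _) hcY
          rw [hY1, ← heq]
          exact hval x
        · have hMn : M = n := by omega
          refine ⟨n + (2*e+1), Dvd.dvd.add (hMn ▸ hdvd) dvd_rfl, by omega, by omega, ?_⟩
          intro x
          set Y := r₀ + ((n : ℕ) : ZMod q) with hYdef
          have h0 : (Y + 1 - F x (Y+1) 1 + (e : ZMod q)).val = 0 := by
            by_contra h0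
            have hu'lt : (Y + 1 - F x (Y+1) 1 + (e : ZMod q)).val < 2*e+1 := hcov1 x (Y+1)
            have hs := off_succ (e := e) (q := q) (by omega) (F x (Y+1) 1) Y
            have hlt : (Y - F x (Y+1) 1 + (e : ZMod q)).val < q := ZMod.val_lt _
            have hox : (Y - F x (Y+1) 1 + (e : ZMod q)).val
                = (Y + 1 - F x (Y+1) 1 + (e : ZMod q)).val - 1 := by
              rcases Nat.lt_or_ge ((Y - F x (Y+1) 1 + (e : ZMod q)).val + 1) q with hlt2 | hge
              · rw [Nat.mod_eq_of_lt hlt2] at hs; omega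
              · have hqe : (Y - F x (Y+1) 1 + (e : ZMod q)).val + 1 = q := by omega
                rw [hqe, Nat.mod_self] at hs; omega
            have heq := huniq x Y (F x (Y+1)) (hmem x (Y+1)) (hcov0 x (Y+1)) (by omega)
            have hvv : Y + 1 - F x (Y+1) 1 + (e : ZMod q) = ((2*e+1 : ℕ) : ZMod q) := by
              rw [heq, hval x, hMn]; push_cast; ring
            rw [hvv, ZMod.val_cast_of_lt (by omega)] at hu'lt
            omega
          have hsp := off_spec (e := e) (F x (Y+1) 1) (Y+1)
          rw [h0] at hsp
          push_cast at hsp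
          rw [hY1]
          push_cast
          linear_combination -hsp
    refine ⟨π (r₀ - (e : ZMod q)), ?_⟩
    intro c hc
    obtain ⟨n, hn⟩ := reach r₀ (c 1)
    obtain ⟨M, hdvd, _, _, hval⟩ := hP n
    have h6 : c 1 = r₀ - (e : ZMod q) + ((M : ℕ) : ZMod q) := by
      calc c 1 = F (c 0) (c 1) 1 := congrFun (hself c hc) 1
        _ = F (c 0) (r₀ + (n : ZMod q)) 1 := by rw [← hn]
        _ = _ := hval (c 0)
    have hM0 : ((M : ℕ) : ZMod (2*e+1)) = 0 :=
      (ZMod.natCast_eq_zero_iff M (2*e+1)).mpr hdvd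
    rw [h6, map_add, map_natCast, hM0, add_zero]
  · -- no full death : first coordinates aligned
    left
    push_neg at hfd
    refine ⟨π (F 0 0 0), ?_⟩
    have hcol : ∀ y, π (F 0 y 0) = π (F 0 0 0) := by
      refine zmodInd _ 0 rfl ?_
      intro y ih
      obtain ⟨x₀, hx₀⟩ := hfd y
      have h1 : (y + 1 - F x₀ y 1 + (e : ZMod q)).val < 2*e+1 := by
        have h2 := hcov1 x₀ y
        rw [off_succ (by omega), Nat.mod_eq_of_lt (by omega)]
        omega
      have heq := huniq x₀ (y+1) (F x₀ y) (hmem x₀ y) (hcov0 x₀ y) h1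
      calc π (F 0 (y+1) 0)
          = π (F x₀ (y+1) 0) := (rowConst hq2 hmem hcov0 hcov1 huniq π hπ (y+1) x₀).symm
        _ = π (F x₀ y 0) := by rw [← heq]
        _ = π (F 0 y 0) := rowConst hq2 hmem hcov0 hcov1 huniq π hπ y x₀
        _ = _ := ih
    intro c hc
    calc π (c 0) = π (F (c 0) (c 1) 0) := congrArg π (congrFun (hself c hc) 0)
      _ = π (F 0 (c 1) 0) := rowConst hq2 hmem hcov0 hcov1 huniq π hπ (c 1) (c 0)
      _ = π (F 0 0 0) := hcol (c 1)

/-- Strip structure: if all codewords have aligned second coordinate, the code is the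
horizontal construction. -/
lemma strip (ht : 2 ≤ t) (hq : q = (2*e+1)*t)
    (hmem : ∀ x y, F x y ∈ C)
    (hcov0 : ∀ x y, (x - F x y 0 + (e : ZMod q)).val < 2*e+1)
    (hcov1 : ∀ x y, (y - F x y 1 + (e : ZMod q)).val < 2*e+1)
    (huniq : ∀ x y c, c ∈ C → (x - c 0 + (e : ZMod q)).val < 2*e+1 →
      (y - c 1 + (e : ZMod q)).val < 2*e+1 → c = F x y)
    (π : ZMod q →+* ZMod (2*e+1)) (hπ : ∀ d : ZMod q, π d = ((d.val : ℕ) : ZMod (2*e+1)))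
    (ρ : ZMod (2*e+1)) (halign : ∀ c ∈ C, π (c 1) = ρ) :
    ∃ (a : ZMod q) (hh : Fin t → ZMod q), ∀ v : Fin 2 → ZMod q,
      v ∈ C ↔ ∃ k s : Fin t,
        v 0 = hh k + ((2*e+1 : ℕ) : ZMod q) * ((s : ℕ) : ZMod q) ∧
        v 1 = a + ((2*e+1 : ℕ) : ZMod q) * ((k : ℕ) : ZMod q) := by
  have hq2 : 2*(2*e+1) ≤ q := by
    calc 2*(2*e+1) = (2*e+1)*2 := by ring
      _ ≤ (2*e+1)*t := Nat.mul_le_mul_left _ ht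
      _ = q := hq.symm
  haveI : NeZero q := ⟨by omega⟩
  haveI : NeZero (2*e+1) := ⟨by omega⟩
  set a : ZMod q := ((ρ.val : ℕ) : ZMod q) with ha
  have hπa : π a = ρ := by
    rw [ha, map_natCast]
    simp [ZMod.natCast_val, ZMod.cast_id]
  set Ym : Fin t → ZMod q := fun k => a + ((2*e+1 : ℕ) : ZMod q) * ((k : ℕ) : ZMod q) with hYm
  have hπY : ∀ k, π (Ym k) = ρ := by
    intro k
    rw [hYm]
    simp only []
    rw [map_add, pi_mul_zero ht hq π, add_zero, hπa]
  have hS1 : ∀ x k, F x (Ym k) 1 = Ym k := by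
    intro x k
    exact aligned_exact hq2 π hπ _ _ (hcov1 x (Ym k))
      (by rw [halign _ (hmem x (Ym k)), hπY k])
  have main : ∀ v : Fin 2 → ZMod q, v ∈ C ↔ ∃ k s : Fin t,
      v 0 = F 0 (Ym k) 0 + ((2*e+1 : ℕ) : ZMod q) * ((s : ℕ) : ZMod q) ∧
      v 1 = a + ((2*e+1 : ℕ) : ZMod q) * ((k : ℕ) : ZMod q) := by
    intro v
    constructor
    · intro hv
      have h1 : π (v 1 - a) = 0 := by rw [map_sub, halign v hv, hπa, sub_self]
      obtain ⟨k, hk⟩ := decomp ht hq π hπ _ h1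
      have hv1 : v 1 = Ym k := by rw [hYm]; linear_combination hk
      have hvF : v = F (v 0) (Ym k) := by
        rw [← hv1]
        exact huniq (v 0) (v 1) v hv (off_self hq2 _) (off_self hq2 _)
      have h3 : π (v 0) = π (F (v 0) (Ym k) 0) := congrArg π (congrFun hvF 0)
      have h2 : π (v 0 - F 0 (Ym k) 0) = 0 := by
        rw [map_sub, h3, rowConst hq2 hmem hcov0 hcov1 huniq π hπ (Ym k) (v 0), sub_self]
      obtain ⟨s, hs⟩ := decomp ht hq π hπ _ h2
      exact ⟨k, s, by linear_combination hs, hv1⟩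
    · rintro ⟨k, s, h0, h1⟩
      set x : ZMod q := F 0 (Ym k) 0 + ((2*e+1 : ℕ) : ZMod q) * ((s : ℕ) : ZMod q) with hx
      have hπx : π x = π (F 0 (Ym k) 0) := by
        rw [hx, map_add, pi_mul_zero ht hq π, add_zero]
      have hFx : F x (Ym k) 0 = x := by
        refine aligned_exact hq2 π hπ _ _ (hcov0 x (Ym k)) ?_
        rw [hπx]
        exact rowConst hq2 hmem hcov0 hcov1 huniq π hπ (Ym k) x
      have hveq : v = F x (Ym k) := by
        funext i
        fin_cases i
        · show v 0 = F x (Ym k) 0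
          rw [hFx, h0]
        · show v 1 = F x (Ym k) 1
          rw [hS1 x k, h1]
      rw [hveq]; exact hmem x (Ym k)
  exact ⟨a, fun k => F 0 (Ym k) 0, main⟩

end Main
end PC


/-- Every two-dimensional perfect code arises from the horizontal or the vertical
construction. -/
theorem stmt3 (e t q : ℕ) (ht : 2 ≤ t) (hq : q = (2 * e + 1) * t)
    (C : Set (Fin 2 → ZMod q)) (hC : IsPerfectCode e C) :
    ∃ (a : ZMod q) (h : Fin t → ZMod q),
      C = {v : Fin 2 → ZMod q | ∃ k s : Fin t,
            v = ![h k + ((2 * e + 1 : ℕ) : ZMod q) * ((s : ℕ) : ZMod q),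
                  a + ((2 * e + 1 : ℕ) : ZMod q) * ((k : ℕ) : ZMod q)]} ∨
      C = {v : Fin 2 → ZMod q | ∃ k s : Fin t,
            v = ![a + ((2 * e + 1 : ℕ) : ZMod q) * ((k : ℕ) : ZMod q),
                  h k + ((2 * e + 1 : ℕ) : ZMod q) * ((s : ℕ) : ZMod q)]} := by
  have hq2 : 2*(2*e+1) ≤ q := by
    calc 2*(2*e+1) = (2*e+1)*2 := by ring
      _ ≤ (2*e+1)*t := Nat.mul_le_mul_left _ ht
      _ = q := hq.symm
  haveI : NeZero q := ⟨by omega⟩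
  have hmd : ∀ (x c : Fin 2 → ZMod q), (maxDist x c ≤ e) ↔
      ((x 0 - c 0 + (e : ZMod q)).val < 2*e+1 ∧ (x 1 - c 1 + (e : ZMod q)).val < 2*e+1) := by
    intro x c
    rw [maxDist, Finset.sup_le_iff]
    constructor
    · intro h
      exact ⟨(PC.lee_iff hq2 _ _).mp (h 0 (Finset.mem_univ _)),
        (PC.lee_iff hq2 _ _).mp (h 1 (Finset.mem_univ _))⟩
    · intro h i _
      fin_cases i
      · exact (PC.lee_iff hq2 _ _).mpr h.1
      · exact (PC.lee_iff hq2 _ _).mpr h.2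
  have hC2 : ∀ x y : ZMod q, ∃ c : Fin 2 → ZMod q,
      (c ∈ C ∧ (x - c 0 + (e : ZMod q)).val < 2*e+1 ∧ (y - c 1 + (e : ZMod q)).val < 2*e+1) ∧
      ∀ c', c' ∈ C → (x - c' 0 + (e : ZMod q)).val < 2*e+1 →
        (y - c' 1 + (e : ZMod q)).val < 2*e+1 → c' = c := by
    intro x y
    obtain ⟨c, ⟨hcC, hcd⟩, hu⟩ := hC ![x, y]
    rw [hmd] at hcd
    simp only [Matrix.cons_val_zero, Matrix.cons_val_one, Matrix.head_cons] at hcd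
    refine ⟨c, ⟨hcC, hcd.1, hcd.2⟩, fun c' h1 h2 h3 => hu c' ⟨h1, ?_⟩⟩
    rw [hmd]
    simp only [Matrix.cons_val_zero, Matrix.cons_val_one, Matrix.head_cons]
    exact ⟨h2, h3⟩
  choose F hF1 hF2 using hC2
  have hmem : ∀ x y, F x y ∈ C := fun x y => (hF1 x y).1
  have hcov0 : ∀ x y, (x - F x y 0 + (e : ZMod q)).val < 2*e+1 := fun x y => (hF1 x y).2.1
  have hcov1 : ∀ x y, (y - F x y 1 + (e : ZMod q)).val < 2*e+1 := fun x y => (hF1 x y).2.2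
  have huniq : ∀ x y c, c ∈ C → (x - c 0 + (e : ZMod q)).val < 2*e+1 →
      (y - c 1 + (e : ZMod q)).val < 2*e+1 → c = F x y :=
    fun x y c h1 h2 h3 => hF2 x y c h1 h2 h3
  set π := ZMod.castHom (⟨t, hq⟩ : (2*e+1) ∣ q) (ZMod (2*e+1)) with hπdef
  have hπ : ∀ d : ZMod q, π d = ((d.val : ℕ) : ZMod (2*e+1)) := fun d => by
    rw [hπdef, ZMod.castHom_apply, ← ZMod.natCast_val]
  rcases PC.dicho ht hq hmem hcov0 hcov1 huniq π hπ with ⟨ρ, hρ⟩ | ⟨ρ, hρ⟩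
  · -- first coordinates aligned : vertical construction
    set C' : Set (Fin 2 → ZMod q) := (fun v : Fin 2 → ZMod q => ![v 1, v 0]) '' C with hC'
    set F' : ZMod q → ZMod q → (Fin 2 → ZMod q) := fun x y => ![F y x 1, F y x 0] with hF'
    have hmem' : ∀ x y, F' x y ∈ C' := fun x y => ⟨F y x, hmem y x, rfl⟩
    have hcov0' : ∀ x y, (x - F' x y 0 + (e : ZMod q)).val < 2*e+1 := by
      intro x y; simp only [hF', Matrix.cons_val_zero]; exact hcov1 y x
    have hcov1' : ∀ x y, (y - F' x y 1 + (e : ZMod q)).val < 2*e+1 := by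
      intro x y; simp only [hF', Matrix.cons_val_one, Matrix.head_cons]; exact hcov0 y x
    have huniq' : ∀ x y c, c ∈ C' → (x - c 0 + (e : ZMod q)).val < 2*e+1 →
        (y - c 1 + (e : ZMod q)).val < 2*e+1 → c = F' x y := by
      intro x y c hc h0 h1
      obtain ⟨c₀, hc₀, rfl⟩ := hc
      simp only [Matrix.cons_val_zero, Matrix.cons_val_one, Matrix.head_cons] at h0 h1
      have hcF := huniq y x c₀ hc₀ h1 h0
      rw [hcF, hF']
    have halign' : ∀ c ∈ C', π (c 1) = ρ := by
      rintro c ⟨c₀, hc₀, rfl⟩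
      simp only [Matrix.cons_val_one, Matrix.head_cons]
      exact hρ c₀ hc₀
    obtain ⟨a, hh, hiff⟩ := PC.strip ht hq hmem' hcov0' hcov1' huniq' π hπ ρ halign'
    refine ⟨a, hh, Or.inr ?_⟩
    ext v
    simp only [Set.mem_setOf_eq]
    constructor
    · intro hv
      have hv' : (![v 1, v 0] : Fin 2 → ZMod q) ∈ C' := ⟨v, hv, rfl⟩
      obtain ⟨k, s, h0, h1⟩ := (hiff _).mp hv'
      simp only [Matrix.cons_val_zero, Matrix.cons_val_one, Matrix.head_cons] at h0 h1
      exact ⟨k, s, (PC.vecEq v _ _).mpr ⟨h1, h0⟩⟩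
    · rintro ⟨k, s, hv⟩
      rw [PC.vecEq v _ _] at hv
      have hv' : (![v 1, v 0] : Fin 2 → ZMod q) ∈ C' :=
        (hiff _).mpr ⟨k, s, by simp [hv.2], by simp [hv.1]⟩
      obtain ⟨c₀, hc₀, hcv⟩ := hv'
      have hc₀v : c₀ = v := by
        funext i; fin_cases i
        · show c₀ 0 = v 0
          have h5 := congrFun hcv 1
          simpa using h5
        · show c₀ 1 = v 1
          have h5 := congrFun hcv 0
          simpa using h5
      rw [← hc₀v]; exact hc₀
  · -- second coordinates aligned : horizontal construction
    obtain ⟨a, hh, hiff⟩ := PC.strip ht hq hmem hcov0 hcov1 huniq π hπ ρ hρ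
    refine ⟨a, hh, Or.inl ?_⟩
    ext v
    simp only [Set.mem_setOf_eq]
    rw [hiff v]
    constructor
    · rintro ⟨k, s, h0, h1⟩; exact ⟨k, s, (PC.vecEq v _ _).mpr ⟨h0, h1⟩⟩
    · rintro ⟨k, s, hv⟩; rw [PC.vecEq v _ _] at hv; exact ⟨k, s, hv.1, hv.2⟩
end

section
/- Let q = (2e+1)·t with integers e ≥ 0 and t ≥ 2. The number of perfect e-codes contained in Z_q^2 is exactly (2e+1)^2 · (2·(2e+1)^{t−1} − 1). -/
namespace Stmt4Aux

variable {q s t : ℕ}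

section OneD
variable [NeZero q]

lemma cast_val (x : ZMod q) : ((x.val : ℕ) : ZMod q) = x := by
  simp [ZMod.natCast_val, ZMod.cast_id]

/-- master identity -/
lemma val_add_sub (x a : ZMod q) : (a.val + (x - a).val) % q = x.val := by
  have h : x = a + ((x - a).val : ℕ) := by rw [cast_val]; ring
  conv_rhs => rw [h]
  rw [show a + ((x - a).val : ℕ) = ((a.val + (x - a).val : ℕ) : ZMod q) by push_cast [cast_val]; ring]
  rw [ZMod.val_natCast]

omit [NeZero q] in
lemma sub_cast_val (x : ZMod q) (n : ℕ) (hn : n < q) : (x - (x - (n : ℕ))).val = n := by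
  rw [show x - (x - (n:ℕ)) = (n : ZMod q) by ring, ZMod.val_cast_of_lt hn]

lemma mod_s_of_val_add_sub (hq : q = s * t) (x a : ZMod q) :
    (a.val + (x - a).val) % s = x.val % s := by
  have h := val_add_sub x a
  have hdvd : s ∣ q := ⟨t, hq⟩
  calc (a.val + (x - a).val) % s = ((a.val + (x - a).val) % q) % s :=
        (Nat.mod_mod_of_dvd _ hdvd).symm
    _ = x.val % s := by rw [h]

/-- In each congruence class mod `s` there is a unique "interval start" covering `x`. -/
lemma exu_of_class (hs : 0 < s) (hq : q = s * t) (γ : ℕ) (hγ : γ < s) (x : ZMod q) :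
    ∃! a : ZMod q, a.val % s = γ ∧ (x - a).val < s := by
  have hq0 : 0 < q := Nat.pos_of_ne_zero (NeZero.ne q)
  have ht1 : 1 ≤ t := by
    by_contra h
    have : t = 0 := by omega
    rw [this, Nat.mul_zero] at hq; omega
  have hsq : s ≤ q := by rw [hq]; nlinarith
  -- uniqueness helper
  have uniq : ∀ a : ZMod q, (a.val % s = γ ∧ (x - a).val < s) →
      a = x - (((x - a).val : ℕ) : ZMod q) := by
    intro a _
    rw [cast_val, sub_sub_cancel]
  have key : ∀ a b : ZMod q, a.val % s = γ → (x - a).val < s →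
      b.val % s = γ → (x - b).val < s → a = b := by
    intro a b ha1 ha2 hb1 hb2
    have h1 : (γ + (x - a).val) % s = x.val % s := by
      rw [← ha1, Nat.add_mod, Nat.mod_mod_of_dvd, ← Nat.add_mod, mod_s_of_val_add_sub hq]
      exact dvd_refl s
    have h2 : (γ + (x - b).val) % s = x.val % s := by
      rw [← hb1, Nat.add_mod, Nat.mod_mod_of_dvd, ← Nat.add_mod, mod_s_of_val_add_sub hq]
      exact dvd_refl s
    have h3 : (x - a).val % s = (x - b).val % s :=
      Nat.ModEq.add_left_cancel' γ (h1.trans h2.symm)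
    have h4 : (x - a).val = (x - b).val := by
      rwa [Nat.mod_eq_of_lt ha2, Nat.mod_eq_of_lt hb2] at h3
    rw [uniq a ⟨ha1, ha2⟩, uniq b ⟨hb1, hb2⟩, h4]
  -- existence
  set D : ℕ := (x - (γ : ZMod q)).val with hD
  have hDlt : D < q := ZMod.val_lt _
  set j : ℕ := D / s with hj
  set r : ℕ := D % s with hr
  have hrs : r < s := Nat.mod_lt _ hs
  have hjt : j < t := (Nat.div_lt_iff_lt_mul hs).2 (by rw [Nat.mul_comm, ← hq]; exact hDlt)
  have hγjs : γ + j * s < q := by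
    have : j * s ≤ (t - 1) * s := Nat.mul_le_mul_right s (by omega)
    have h2 : (t-1) * s + s = q := by rw [hq]; cases t with
      | zero => omega
      | succ n => simp [Nat.succ_sub_one]; ring
    omega
  have hDeq : D = j * s + r := by rw [hj, hr, Nat.mul_comm]; exact (Nat.div_add_mod D s).symm
  refine ⟨((γ + j * s : ℕ) : ZMod q), ⟨?_, ?_⟩, fun y hy => key y _ hy.1 hy.2 ?_ ?_⟩
  · rw [ZMod.val_cast_of_lt hγjs, Nat.add_mul_mod_self_right, Nat.mod_eq_of_lt hγ]
  · have hxg : x - ((γ + j * s : ℕ) : ZMod q) = ((r : ℕ) : ZMod q) := by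
      have h1 : ((D : ℕ) : ZMod q) = x - (γ : ZMod q) := cast_val _
      have h2 : ((D : ℕ) : ZMod q) = ((j * s + r : ℕ) : ZMod q) := by rw [← hDeq]
      push_cast at h2 ⊢
      linear_combination h1.symm + h2
    rw [hxg, ZMod.val_cast_of_lt (lt_of_lt_of_le hrs hsq)]
    exact hrs
  · rw [ZMod.val_cast_of_lt hγjs, Nat.add_mul_mod_self_right, Nat.mod_eq_of_lt hγ]
  · have hxg : x - ((γ + j * s : ℕ) : ZMod q) = ((r : ℕ) : ZMod q) := by
      have h1 : ((D : ℕ) : ZMod q) = x - (γ : ZMod q) := cast_val _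
      have h2 : ((D : ℕ) : ZMod q) = ((j * s + r : ℕ) : ZMod q) := by rw [← hDeq]
      push_cast at h2 ⊢
      linear_combination h1.symm + h2
    rw [hxg, ZMod.val_cast_of_lt (lt_of_lt_of_le hrs hsq)]
    exact hrs

/-- If intervals of length `s` starting at points of `S` exactly cover `ZMod q`,
then all elements of `S` are congruent mod `s`. -/
lemma class_const_of_partition (hs : 0 < s) (hq : q = s * t)
    (S : Set (ZMod q)) (hS : ∀ x : ZMod q, ∃! a, a ∈ S ∧ (x - a).val < s)
    {a b : ZMod q} (ha : a ∈ S) (hb : b ∈ S) : a.val % s = b.val % s := by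
  have hq0 : 0 < q := Nat.pos_of_ne_zero (NeZero.ne q)
  have ht1 : 1 ≤ t := by
    by_contra h
    have : t = 0 := by omega
    rw [this, Nat.mul_zero] at hq; omega
  have hsq : s < q ∨ s = q := by
    rcases eq_or_lt_of_le (show s ≤ q by rw [hq]; nlinarith) with h | h
    · exact Or.inr h
    · exact Or.inl h
  have hsltq : s ≤ q := by rw [hq]; nlinarith
  -- closure under + s
  have step : ∀ c : ZMod q, c ∈ S → c + (s : ZMod q) ∈ S := by
    intro c hc
    obtain ⟨a', ⟨ha'S, ha'cov⟩, huniq⟩ := hS (c + (s : ZMod q))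
    set u : ℕ := (c + (s : ZMod q) - a').val with hu
    by_cases hu0 : u = 0
    · have : a' = c + (s : ZMod q) := by
        have h1 : c + (s : ZMod q) - a' = ((u : ℕ) : ZMod q) := (cast_val _).symm
        rw [hu0] at h1; push_cast at h1
        linear_combination -h1
      rwa [← this]
    · exfalso
      have hus : u < s := ha'cov
      -- a' = c + s - u ; point a' is covered by both a' and c
      have ha'eq : a' = c + (s : ZMod q) - ((u : ℕ) : ZMod q) := by
        have h1 : c + (s : ZMod q) - a' = ((u : ℕ) : ZMod q) := (cast_val _).symm
        linear_combination -h1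
      have hcov_c : (a' - c).val < s := by
        have h2 : a' - c = ((s - u : ℕ) : ZMod q) := by
          rw [ha'eq]; push_cast [Nat.cast_sub (le_of_lt hus)]; ring
        rw [h2, ZMod.val_cast_of_lt (by omega)]
        omega
      have hcov_a' : (a' - a').val < s := by simp [hs]
      obtain ⟨w, _, hwuniq⟩ := hS a'
      have e1 : a' = w := hwuniq a' ⟨ha'S, hcov_a'⟩
      have e2 : c = w := hwuniq c ⟨hc, hcov_c⟩
      rw [← e2] at e1
      rw [e1] at ha'eq
      have : ((s : ℕ) : ZMod q) = ((u : ℕ) : ZMod q) := by linear_combination -ha'eq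
      have hv : s % q = u % q := by
        have := congrArg ZMod.val this
        rwa [ZMod.val_natCast, ZMod.val_natCast] at this
      rcases hsq with h | h
      · rw [Nat.mod_eq_of_lt h, Nat.mod_eq_of_lt (by omega)] at hv; omega
      · rw [← h] at hv
        simp at hv
        rw [Nat.mod_eq_of_lt (by omega)] at hv
        omega
  have steps : ∀ k : ℕ, a + ((k * s : ℕ) : ZMod q) ∈ S := by
    intro k
    induction k with
    | zero => simpa using ha
    | succ n ih =>
      have : a + (((n + 1) * s : ℕ) : ZMod q) = (a + ((n * s : ℕ) : ZMod q)) + (s : ZMod q) := by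
        push_cast; ring
      rw [this]; exact step _ ih
  -- now reach b
  set w : ℕ := (b - a).val with hw
  have hwlt : w < q := ZMod.val_lt _
  set k : ℕ := w / s with hk
  have hks : k * s ≤ w := by rw [hk]; exact Nat.div_mul_le_self w s
  have hmod : w - k * s = w % s := by
    have h := Nat.div_add_mod w s
    rw [hk, Nat.mul_comm]
    omega
  have hcov : (b - (a + ((k * s : ℕ) : ZMod q))).val < s := by
    have h1 : b - (a + ((k * s : ℕ) : ZMod q)) = ((w - k * s : ℕ) : ZMod q) := by
      have h2 : ((w : ℕ) : ZMod q) = b - a := cast_val _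
      push_cast [Nat.cast_sub hks]
      linear_combination -h2
    rw [h1, ZMod.val_cast_of_lt (by omega)]
    rw [hmod]; exact Nat.mod_lt _ hs
  obtain ⟨z, _, hzuniq⟩ := hS b
  have e1 : b = z := hzuniq b ⟨hb, by simp [hs]⟩
  have e2 : a + ((k * s : ℕ) : ZMod q) = z := hzuniq _ ⟨steps k, hcov⟩
  have e3 : b = a + ((k * s : ℕ) : ZMod q) := by rw [e1, ← e2]
  have : b.val = (a.val + k * s) % q := by
    rw [e3]
    rw [show a + ((k * s : ℕ) : ZMod q) = ((a.val + k * s : ℕ) : ZMod q) by push_cast [cast_val]; ring]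
    rw [ZMod.val_natCast]
  rw [this, Nat.mod_mod_of_dvd _ ⟨t, hq⟩, Nat.add_mul_mod_self_right]

end OneD

variable (s) in
/-- `a` is the corner of the `s × s` square containing `x`. -/
def Cov {q : ℕ} (a x : Fin 2 → ZMod q) : Prop := ∀ i, (x i - a i).val < s

variable (s) in
def Tiling {q : ℕ} (T : Set (Fin 2 → ZMod q)) : Prop :=
  ∀ x : Fin 2 → ZMod q, ∃! a, a ∈ T ∧ Cov s a x

lemma cov_iff {q : ℕ} (a x : Fin 2 → ZMod q) :
    Cov s a x ↔ (x 0 - a 0).val < s ∧ (x 1 - a 1).val < s := Fin.forall_fin_two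

section TwoD

lemma fin2_pair : ∀ i₀ i₁ : Fin 2, i₀ ≠ i₁ → ∀ j : Fin 2, j = i₀ ∨ j = i₁ := by decide

variable [NeZero q]

/-- Two squares meeting a common "row" (in coordinate `i₁`) have congruent corners in
coordinate `i₀`. -/
lemma gen_cong (hs : 0 < s) (hq : q = s * t) (i₀ i₁ : Fin 2) (hne : i₀ ≠ i₁)
    {T : Set (Fin 2 → ZMod q)} (hT : Tiling s T)
    {c c' : Fin 2 → ZMod q} (hc : c ∈ T) (hc' : c' ∈ T) (y : ZMod q)
    (h1 : (y - c i₁).val < s) (h2 : (y - c' i₁).val < s) :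
    (c i₀).val % s = (c' i₀).val % s := by
  have hpair : ∀ j : Fin 2, j = i₀ ∨ j = i₁ := fin2_pair i₀ i₁ hne
  set S : Set (ZMod q) := {z | ∃ d, d ∈ T ∧ d i₀ = z ∧ (y - d i₁).val < s} with hSdef
  have hS : ∀ x : ZMod q, ∃! a, a ∈ S ∧ (x - a).val < s := by
    intro x
    set p : Fin 2 → ZMod q := fun j => if j = i₀ then x else y with hp
    have hp0 : p i₀ = x := by simp [hp]
    have hp1 : p i₁ = y := by simp [hp, (hne.symm : i₁ ≠ i₀)]
    obtain ⟨d, ⟨hdT, hdcov⟩, hduniq⟩ := hT p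
    refine ⟨d i₀, ⟨⟨d, hdT, rfl, by rw [← hp1]; exact hdcov i₁⟩, by rw [← hp0]; exact hdcov i₀⟩, ?_⟩
    rintro z ⟨⟨d', hd'T, rfl, hd'row⟩, hd'cov⟩
    have : d' = d := by
      apply hduniq
      refine ⟨hd'T, fun j => ?_⟩
      rcases hpair j with h | h
      · rw [h, hp0]; exact hd'cov
      · rw [h, hp1]; exact hd'row
    rw [this]
  have hcS : c i₀ ∈ S := ⟨c, hc, rfl, h1⟩
  have hc'S : c' i₀ ∈ S := ⟨c', hc', rfl, h2⟩
  exact class_const_of_partition hs hq S hS hcS hc'S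

lemma val_sub_self (x : ZMod q) : (x - x).val < s ↔ 0 < s := by simp

/-- Dichotomy: every tiling is column-aligned or row-aligned. -/
lemma dichotomy (hs : 0 < s) (ht : 2 ≤ t) (hq : q = s * t)
    {T : Set (Fin 2 → ZMod q)} (hT : Tiling s T) :
    (∀ c ∈ T, ∀ c' ∈ T, (c 0).val % s = (c' 0).val % s) ∨
    (∀ c ∈ T, ∀ c' ∈ T, (c 1).val % s = (c' 1).val % s) := by
  by_cases hcol : ∀ c ∈ T, ∀ c' ∈ T, (c 0).val % s = (c' 0).val % s
  · exact Or.inl hcol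
  push_neg at hcol
  obtain ⟨c, hc, c', hc', hcne⟩ := hcol
  right
  have hq0 : 0 < q := Nat.pos_of_ne_zero (NeZero.ne q)
  have hsq : s < q := by rw [hq]; nlinarith
  -- F y := mod-s class (in coordinate 0) of the square covering (0, y)
  set F : ZMod q → ℕ := fun y => ((hT ![0, y]).exists.choose 0).val % s with hF
  have hFspec : ∀ y : ZMod q,
      (hT ![0, y]).exists.choose ∈ T ∧ Cov s ((hT ![0, y]).exists.choose) ![0, y] :=
    fun y => (hT ![0, y]).exists.choose_spec
  have hF0 : ∀ d ∈ T, ∀ y : ZMod q, (y - d 1).val < s → (d 0).val % s = F y := by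
    intro d hd y hy
    refine gen_cong hs hq 0 1 (by decide) hT hd (hFspec y).1 y hy ?_
    have := (hFspec y).2 1
    simpa using this
  have hself : ∀ z : ZMod q, (z - z).val < s := by intro z; simp [hs]
  -- there exist adjacent rows with different classes
  have hstep : ∃ y : ZMod q, F y ≠ F (y + 1) := by
    by_contra hcon
    push_neg at hcon
    have hconst : ∀ (y : ZMod q) (n : ℕ), F (y + (n : ℕ)) = F y := by
      intro y n
      induction n with
      | zero => simp
      | succ m ih =>
        have : y + ((m + 1 : ℕ) : ZMod q) = (y + (m : ℕ)) + 1 := by push_cast; ring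
        rw [this, ← hcon (y + (m : ℕ))]
        exact ih
    have h1 : F (c 1) = (c 0).val % s := (hF0 c hc (c 1) (hself _)).symm
    have h2 : F (c' 1) = (c' 0).val % s := (hF0 c' hc' (c' 1) (hself _)).symm
    have h3 : c' 1 = c 1 + (((c' 1 - c 1).val : ℕ) : ZMod q) := by
      rw [cast_val]; ring
    have h4 : F (c' 1) = F (c 1) := by rw [h3]; exact hconst _ _
    exact hcne (h1 ▸ h2 ▸ h4 ▸ rfl)
  obtain ⟨y, hy⟩ := hstep
  -- every square meeting row y has its top edge at row y
  set V : ℕ := (y + 1 - ((s : ℕ) : ZMod q)).val % s with hV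
  have main : ∀ d ∈ T, (d 1).val % s = V := by
    intro d hd
    obtain ⟨hc₁T, hc₁cov⟩ := (hT ![d 0, y]).exists.choose_spec
    set c₁ := (hT ![d 0, y]).exists.choose with hc₁
    have hcov0 : (d 0 - c₁ 0).val < s := by simpa using hc₁cov 0
    have hcov1 : (y - c₁ 1).val < s := by simpa using hc₁cov 1
    have hcol : (d 1).val % s = (c₁ 1).val % s :=
      gen_cong hs hq 1 0 (by decide) hT hd hc₁T (d 0) (hself _) hcov0
    set v : ℕ := (y - c₁ 1).val with hv
    have hveq : v = s - 1 := by
      by_contra hvne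
      have hv1 : v + 1 < s := by omega
      have h5 : (y + 1 - c₁ 1).val < s := by
        have h6 : y + 1 - c₁ 1 = (((v + 1 : ℕ)) : ZMod q) := by
          have h7 : ((v : ℕ) : ZMod q) = y - c₁ 1 := cast_val _
          push_cast
          linear_combination -h7
        rw [h6, ZMod.val_cast_of_lt (by omega)]
        exact hv1
      have e1 : (c₁ 0).val % s = F y := hF0 c₁ hc₁T y hcov1
      have e2 : (c₁ 0).val % s = F (y + 1) := hF0 c₁ hc₁T (y + 1) h5
      exact hy (e1 ▸ e2)
    have hc₁1 : c₁ 1 = y + 1 - ((s : ℕ) : ZMod q) := by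
      have h7 : ((v : ℕ) : ZMod q) = y - c₁ 1 := cast_val _
      rw [hveq] at h7
      push_cast [Nat.cast_sub (show 1 ≤ s from hs)] at h7
      linear_combination h7
    rw [hcol, hc₁1]
  intro a ha b hb
  rw [main a ha, main b hb]
end TwoD

/-- The column-structured tiling with column class `α` and per-strip row classes `β`. -/
def Tcol (q s t : ℕ) (α : Fin s) (β : Fin t → Fin s) : Set (Fin 2 → ZMod q) :=
  {c | (c 0).val % s = α.val ∧
    ∀ h : (c 0).val / s < t, (c 1).val % s = (β ⟨(c 0).val / s, h⟩).val}

section Count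
variable [NeZero q]

lemma div_lt_t (hs : 0 < s) (hq : q = s * t) (x : ZMod q) : x.val / s < t :=
  (Nat.div_lt_iff_lt_mul hs).2 (by rw [Nat.mul_comm, ← hq]; exact ZMod.val_lt x)

lemma mem_Tcol_iff (hs : 0 < s) (hq : q = s * t) (α : Fin s) (β : Fin t → Fin s)
    (c : Fin 2 → ZMod q) :
    c ∈ Tcol q s t α β ↔ (c 0).val % s = α.val ∧
      (c 1).val % s = (β ⟨(c 0).val / s, div_lt_t hs hq (c 0)⟩).val := by
  constructor
  · rintro ⟨h1, h2⟩; exact ⟨h1, h2 _⟩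
  · rintro ⟨h1, h2⟩; exact ⟨h1, fun h => h2⟩

lemma Tcol_tiling (hs : 0 < s) (hq : q = s * t) (α : Fin s) (β : Fin t → Fin s) :
    Tiling s (Tcol q s t α β) := by
  intro x
  obtain ⟨a, ⟨ha1, ha2⟩, hau⟩ := exu_of_class hs hq α.val α.isLt (x 0)
  obtain ⟨b, ⟨hb1, hb2⟩, hbu⟩ :=
    exu_of_class hs hq (β ⟨a.val / s, div_lt_t hs hq a⟩).val (β _).isLt (x 1)
  refine ⟨![a, b], ⟨?_, ?_⟩, ?_⟩
  · rw [mem_Tcol_iff hs hq]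
    constructor
    · simpa using ha1
    · simpa using hb1
  · intro i
    match i with
    | 0 => simpa using ha2
    | 1 => simpa using hb2
  · rintro c ⟨hcmem, hccov⟩
    rw [mem_Tcol_iff hs hq] at hcmem
    have hc0 : c 0 = a := hau (c 0) ⟨hcmem.1, hccov 0⟩
    have hc1 : c 1 = b := by
      apply hbu (c 1)
      refine ⟨?_, hccov 1⟩
      rw [hcmem.2, hc0]
    funext i
    match i with
    | 0 => simpa using hc0
    | 1 => simpa using hc1

/-- The canonical corner of strip `i` in `Tcol α β`. -/
def stripCorner (q s t : ℕ) (α : Fin s) (β : Fin t → Fin s) (i : Fin t) : Fin 2 → ZMod q :=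
  ![((α.val + i.val * s : ℕ) : ZMod q), (((β i).val : ℕ) : ZMod q)]

lemma stripCorner_val0 (hs : 0 < s) (ht : 1 ≤ t) (hq : q = s * t) (α : Fin s)
    (β : Fin t → Fin s) (i : Fin t) :
    ((stripCorner q s t α β i) 0).val = α.val + i.val * s := by
  have hlt : α.val + i.val * s < q := by
    have h1 : i.val * s ≤ (t - 1) * s := Nat.mul_le_mul_right s (by omega)
    have h2 : (t - 1) * s + s = q := by
      rw [hq]; cases t with
      | zero => omega
      | succ n => simp [Nat.succ_sub_one]; ring
    have := α.isLt
    omega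
  simp only [stripCorner, Matrix.cons_val_zero]
  exact ZMod.val_cast_of_lt hlt

lemma stripCorner_mem (hs : 0 < s) (ht : 1 ≤ t) (hq : q = s * t) (α : Fin s)
    (β : Fin t → Fin s) (i : Fin t) :
    stripCorner q s t α β i ∈ Tcol q s t α β := by
  have h0 := stripCorner_val0 (q := q) hs ht hq α β i
  have hdiv : ((stripCorner q s t α β i) 0).val / s = i.val := by
    rw [h0, Nat.add_mul_div_right _ _ hs, Nat.div_eq_of_lt α.isLt, Nat.zero_add]
  have hmod : ((stripCorner q s t α β i) 0).val % s = α.val := by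
    rw [h0, Nat.add_mul_mod_self_right, Nat.mod_eq_of_lt α.isLt]
  refine ⟨hmod, fun h => ?_⟩
  have h1 : ((stripCorner q s t α β i) 1).val = (β i).val := by
    simp only [stripCorner, Matrix.cons_val_one, Matrix.head_cons]
    exact ZMod.val_cast_of_lt (lt_of_lt_of_le (β i).isLt (by rw [hq]; nlinarith))
  rw [h1]
  have h5 : (⟨(stripCorner q s t α β i 0).val / s, h⟩ : Fin t) = i := Fin.ext hdiv
  rw [h5]
  exact Nat.mod_eq_of_lt (β i).isLt

lemma Tcol_inj (hs : 0 < s) (ht : 1 ≤ t) (hq : q = s * t)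
    (α α' : Fin s) (β β' : Fin t → Fin s)
    (h : Tcol q s t α β = Tcol q s t α' β') : α = α' ∧ β = β' := by
  have hα : α = α' := by
    have h1 := stripCorner_mem (q := q) hs ht hq α β ⟨0, by omega⟩
    rw [h] at h1
    have h2 := (mem_Tcol_iff hs hq α' β' _).1 h1 |>.1
    have h3 := (mem_Tcol_iff hs hq α β _).1 (stripCorner_mem (q := q) hs ht hq α β ⟨0, by omega⟩) |>.1
    exact Fin.ext (h3.symm.trans h2)
  refine ⟨hα, funext fun i => ?_⟩
  have h1 := stripCorner_mem (q := q) hs ht hq α β i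
  rw [h] at h1
  have h2 := (mem_Tcol_iff hs hq α' β' _).1 h1 |>.2
  have h3 := (mem_Tcol_iff hs hq α β _).1 (stripCorner_mem (q := q) hs ht hq α β i) |>.2
  have hdiv : ((stripCorner q s t α β i) 0).val / s = i.val := by
    rw [stripCorner_val0 (q := q) hs ht hq α β i, Nat.add_mul_div_right _ _ hs,
      Nat.div_eq_of_lt α.isLt, Nat.zero_add]
  apply Fin.ext
  have h4 : (⟨((stripCorner q s t α β i) 0).val / s,
      div_lt_t hs hq ((stripCorner q s t α β i) 0)⟩ : Fin t) = i := Fin.ext hdiv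
  rw [h4] at h2 h3
  exact h3.symm.trans h2

lemma stripCorner_val1mod (hq : q = s * t) (α : Fin s) (β : Fin t → Fin s) (i : Fin t) :
    ((stripCorner q s t α β i) 1).val % s = (β i).val := by
  have hst : s ≤ q := by rw [hq]; nlinarith [i.pos]
  have h1 : ((stripCorner q s t α β i) 1).val = (β i).val := by
    simp only [stripCorner, Matrix.cons_val_one, Matrix.head_cons]
    exact ZMod.val_cast_of_lt (lt_of_lt_of_le (β i).isLt hst)
  rw [h1, Nat.mod_eq_of_lt (β i).isLt]

lemma Tcol_pcol (α : Fin s) (β : Fin t → Fin s) :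
    ∀ c ∈ Tcol q s t α β, ∀ c' ∈ Tcol q s t α β, (c 0).val % s = (c' 0).val % s := by
  rintro c ⟨h1, _⟩ c' ⟨h1', _⟩
  rw [h1, h1']

lemma Tcol_surj (hs : 0 < s) (ht : 1 ≤ t) (hq : q = s * t)
    {T : Set (Fin 2 → ZMod q)} (hT : Tiling s T)
    (hPcol : ∀ c ∈ T, ∀ c' ∈ T, (c 0).val % s = (c' 0).val % s) :
    ∃ α β, T = Tcol q s t α β := by
  obtain ⟨c₀, ⟨hc₀T, _⟩, _⟩ := hT 0
  set α : Fin s := ⟨(c₀ 0).val % s, Nat.mod_lt _ hs⟩ with hα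
  have hd : ∀ i : Fin t, ∃ d, d ∈ T ∧ Cov s d (stripCorner q s t α (fun _ => α) i) :=
    fun i => (hT _).exists
  choose d hdT hdcov using hd
  set β : Fin t → Fin s := fun i => ⟨(d i 1).val % s, Nat.mod_lt _ hs⟩ with hβ
  have hself : ∀ z : ZMod q, (z - z).val < s := by intro z; simp [hs]
  have hx0 : ∀ i : Fin t, ((stripCorner q s t α (fun _ => α) i) 0).val = α.val + i.val * s :=
    fun i => stripCorner_val0 (q := q) hs ht hq α _ i
  have sub1 : ∀ c ∈ T, c ∈ Tcol q s t α β := by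
    intro c hcT
    rw [mem_Tcol_iff hs hq]
    have hmod : (c 0).val % s = α.val := hPcol c hcT c₀ hc₀T
    refine ⟨hmod, ?_⟩
    set i : Fin t := ⟨(c 0).val / s, div_lt_t hs hq (c 0)⟩ with hi
    have hceq : c 0 = (stripCorner q s t α (fun _ => α) i) 0 := by
      apply ZMod.val_injective
      rw [hx0 i]
      have h1 := Nat.div_add_mod (c 0).val s
      have h2 : i.val = (c 0).val / s := rfl
      rw [h2, Nat.mul_comm]
      omega
    have hcong : (c 1).val % s = (d i 1).val % s := by
      refine gen_cong hs hq 1 0 (by decide) hT hcT (hdT i)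
        ((stripCorner q s t α (fun _ => α) i) 0) ?_ (hdcov i 0)
      rw [← hceq]; exact hself _
    rw [hcong]
  have sub2 : ∀ c ∈ Tcol q s t α β, c ∈ T := by
    intro c hc
    rw [mem_Tcol_iff hs hq] at hc
    obtain ⟨c', ⟨hc'T, hc'cov⟩, _⟩ := hT c
    have hc'mem := (mem_Tcol_iff hs hq α β c').1 (sub1 c' hc'T)
    have h0 : c' 0 = c 0 := by
      have hexu := exu_of_class hs hq α.val α.isLt (c 0)
      exact hexu.unique ⟨hc'mem.1, hc'cov 0⟩ ⟨hc.1, hself _⟩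
    have h1 : c' 1 = c 1 := by
      set i : Fin t := ⟨(c 0).val / s, div_lt_t hs hq (c 0)⟩ with hi
      have hexu := exu_of_class hs hq (β i).val (β i).isLt (c 1)
      have hc'cls : (c' 1).val % s = (β i).val := by
        rw [hc'mem.2]
        congr 2
        rw [h0]
      exact hexu.unique ⟨hc'cls, hc'cov 1⟩ ⟨hc.2, hself _⟩
    have : c' = c := by
      funext j
      match j with
      | 0 => exact h0
      | 1 => exact h1
    rwa [← this]
  exact ⟨α, β, Set.ext fun c => ⟨fun h => sub1 c h, fun h => sub2 c h⟩⟩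

lemma Tcol_prow_iff (hs : 0 < s) (ht : 1 ≤ t) (hq : q = s * t)
    (α : Fin s) (β : Fin t → Fin s) :
    (∀ c ∈ Tcol q s t α β, ∀ c' ∈ Tcol q s t α β, (c 1).val % s = (c' 1).val % s) ↔
      ∀ i j : Fin t, β i = β j := by
  constructor
  · intro h i j
    have h1 := h _ (stripCorner_mem (q := q) hs ht hq α β i)
      _ (stripCorner_mem (q := q) hs ht hq α β j)
    rw [stripCorner_val1mod hq, stripCorner_val1mod hq] at h1
    exact Fin.ext h1
  · intro h c hc c' hc'
    rw [mem_Tcol_iff hs hq] at hc hc'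
    rw [hc.2, hc'.2]
    rw [h ⟨(c 0).val / s, div_lt_t hs hq (c 0)⟩ ⟨(c' 0).val / s, div_lt_t hs hq (c' 0)⟩]

end Count

section Swap
variable [NeZero q]

def swP {q : ℕ} (c : Fin 2 → ZMod q) : Fin 2 → ZMod q := ![c 1, c 0]

omit [NeZero q] in
lemma swP_swP (c : Fin 2 → ZMod q) : swP (swP c) = c := by
  funext j
  match j with
  | 0 => simp [swP]
  | 1 => simp [swP]

omit [NeZero q] in
lemma swP_image_image (T : Set (Fin 2 → ZMod q)) : swP '' (swP '' T) = T := by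
  rw [Set.image_image]
  simp [swP_swP]

omit [NeZero q] in
lemma cov_swP {a x : Fin 2 → ZMod q} (h : Cov s a x) : Cov s (swP a) (swP x) := by
  rw [cov_iff] at h ⊢
  simp only [swP, Matrix.cons_val_zero, Matrix.cons_val_one, Matrix.head_cons]
  exact h.symm

omit [NeZero q] in
lemma tiling_swP {T : Set (Fin 2 → ZMod q)} (hT : Tiling s T) : Tiling s (swP '' T) := by
  intro x
  obtain ⟨a, ⟨haT, hacov⟩, hau⟩ := hT (swP x)
  refine ⟨swP a, ⟨⟨a, haT, rfl⟩, ?_⟩, ?_⟩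
  · have := cov_swP (s := s) hacov
    rwa [swP_swP] at this
  · rintro y ⟨⟨b, hbT, rfl⟩, hbcov⟩
    have : Cov s b (swP x) := by
      have := cov_swP (s := s) hbcov
      rwa [swP_swP] at this
    rw [hau b ⟨hbT, this⟩]

omit [NeZero q] in
lemma pcol_swP_iff {T : Set (Fin 2 → ZMod q)} :
    (∀ c ∈ swP '' T, ∀ c' ∈ swP '' T, (c 0).val % s = (c' 0).val % s) ↔
    (∀ c ∈ T, ∀ c' ∈ T, (c 1).val % s = (c' 1).val % s) := by
  constructor
  · intro h c hc c' hc'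
    have := h (swP c) ⟨c, hc, rfl⟩ (swP c') ⟨c', hc', rfl⟩
    simpa [swP] using this
  · rintro h c ⟨b, hb, rfl⟩ c' ⟨b', hb', rfl⟩
    simpa [swP] using h b hb b' hb'

end Swap

section Final
variable [NeZero q]

def VSet (q s : ℕ) : Set (Set (Fin 2 → ZMod q)) :=
  {T | Tiling s T ∧ ∀ c ∈ T, ∀ c' ∈ T, (c 0).val % s = (c' 0).val % s}

def HSet (q s : ℕ) : Set (Set (Fin 2 → ZMod q)) :=
  {T | Tiling s T ∧ ∀ c ∈ T, ∀ c' ∈ T, (c 1).val % s = (c' 1).val % s}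

lemma tiling_eq_union (hs : 0 < s) (ht : 2 ≤ t) (hq : q = s * t) :
    {T : Set (Fin 2 → ZMod q) | Tiling s T} = VSet q s ∪ HSet q s := by
  ext T
  constructor
  · intro hT
    rcases dichotomy hs ht hq hT with h | h
    · exact Or.inl ⟨hT, h⟩
    · exact Or.inr ⟨hT, h⟩
  · rintro (⟨h, _⟩ | ⟨h, _⟩) <;> exact h

lemma VSet_eq_range (hs : 0 < s) (ht : 1 ≤ t) (hq : q = s * t) :
    VSet q s = (fun p : Fin s × (Fin t → Fin s) => Tcol q s t p.1 p.2) '' Set.univ := by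
  ext T
  constructor
  · rintro ⟨hT, hP⟩
    obtain ⟨α, β, rfl⟩ := Tcol_surj hs ht hq hT hP
    exact ⟨(α, β), trivial, rfl⟩
  · rintro ⟨⟨α, β⟩, -, rfl⟩
    exact ⟨Tcol_tiling hs hq α β, Tcol_pcol α β⟩

lemma Tcol_map_inj (hs : 0 < s) (ht : 1 ≤ t) (hq : q = s * t) :
    Function.Injective (fun p : Fin s × (Fin t → Fin s) => Tcol q s t p.1 p.2) := by
  rintro ⟨α, β⟩ ⟨α', β'⟩ h
  obtain ⟨h1, h2⟩ := Tcol_inj hs ht hq α α' β β' h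
  simp [h1, h2]

lemma HSet_eq_image : HSet q s = (Set.image (swP (q := q))) '' VSet q s := by
  ext T
  constructor
  · rintro ⟨hT, hP⟩
    refine ⟨swP '' T, ⟨tiling_swP hT, (pcol_swP_iff (s := s)).2 hP⟩, swP_image_image T⟩
  · rintro ⟨T', ⟨hT', hP'⟩, rfl⟩
    refine ⟨tiling_swP hT', ?_⟩
    have h2 := (pcol_swP_iff (s := s) (T := swP '' T')).1
    rw [swP_image_image] at h2
    intro c hc c' hc'
    rcases hc with ⟨b, hb, rfl⟩
    rcases hc' with ⟨b', hb', rfl⟩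
    simpa [swP] using hP' b hb b' hb'

lemma VSet_inter_HSet (hs : 0 < s) (ht : 1 ≤ t) (hq : q = s * t) :
    VSet q s ∩ HSet q s =
      (fun p : Fin s × Fin s => Tcol q s t p.1 (fun _ => p.2)) '' Set.univ := by
  ext T
  constructor
  · rintro ⟨⟨hT, hP⟩, ⟨-, hProw⟩⟩
    obtain ⟨α, β, rfl⟩ := Tcol_surj hs ht hq hT hP
    have hconst := (Tcol_prow_iff hs ht hq α β).1 hProw
    refine ⟨(α, β ⟨0, ht⟩), trivial, ?_⟩
    simp only
    rw [show (fun _ : Fin t => β ⟨0, ht⟩) = β from funext fun i => hconst ⟨0, ht⟩ i]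
  · rintro ⟨⟨α, b⟩, -, rfl⟩
    refine ⟨⟨Tcol_tiling hs hq _ _, Tcol_pcol _ _⟩, Tcol_tiling hs hq _ _, ?_⟩
    exact (Tcol_prow_iff hs ht hq α _).2 (fun i j => rfl)

lemma const_map_inj (hs : 0 < s) (ht : 1 ≤ t) (hq : q = s * t) :
    Function.Injective (fun p : Fin s × Fin s => Tcol q s t p.1 (fun _ => p.2)) := by
  rintro ⟨α, b⟩ ⟨α', b'⟩ h
  obtain ⟨h1, h2⟩ := Tcol_inj hs ht hq α α' _ _ h
  have h3 := congrFun h2 ⟨0, ht⟩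
  simp only at h3
  simp [h1, h3]

lemma count_tilings (hs : 0 < s) (ht : 2 ≤ t) (hq : q = s * t) :
    {T : Set (Fin 2 → ZMod q) | Tiling s T}.ncard = 2 * (s * s ^ t) - s * s := by
  have ht1 : 1 ≤ t := by omega
  have hVcard : (VSet q s : Set (Set (Fin 2 → ZMod q))).ncard = s * s ^ t := by
    rw [VSet_eq_range hs ht1 hq,
      Set.ncard_image_of_injective _ (Tcol_map_inj hs ht1 hq), Set.ncard_univ]
    simp [Nat.card_eq_fintype_card]
  have hswinj : Function.Injective (Set.image (swP (q := q))) := by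
    intro A B h
    rw [← swP_image_image A, h, swP_image_image]
  have hHcard : (HSet q s : Set (Set (Fin 2 → ZMod q))).ncard = s * s ^ t := by
    rw [HSet_eq_image, Set.ncard_image_of_injective _ hswinj, hVcard]
  have hIcard : ((VSet q s ∩ HSet q s) : Set (Set (Fin 2 → ZMod q))).ncard = s * s := by
    rw [VSet_inter_HSet hs ht1 hq,
      Set.ncard_image_of_injective _ (const_map_inj hs ht1 hq), Set.ncard_univ]
    simp [Nat.card_eq_fintype_card]
  have hkey := Set.ncard_union_add_ncard_inter (VSet q s) (HSet q s)
  rw [tiling_eq_union hs ht hq, hVcard, hHcard, hIcard] at *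
  omega

lemma lee_iff (e : ℕ) (ht : 2 ≤ t) (hq : q = (2 * e + 1) * t) (x c : ZMod q) :
    leeDist x c ≤ e ↔ (x - (c - ((e : ℕ) : ZMod q))).val < 2 * e + 1 := by
  have hq0 : 0 < q := Nat.pos_of_ne_zero (NeZero.ne q)
  have hqe : 4 * e + 2 ≤ q := by rw [hq]; nlinarith
  set v : ℕ := (x - c).val with hv
  have hvq : v < q := ZMod.val_lt _
  have heq : x - (c - ((e : ℕ) : ZMod q)) = (((v + e : ℕ)) : ZMod q) := by
    have h1 : ((v : ℕ) : ZMod q) = x - c := cast_val _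
    push_cast
    linear_combination -h1
  rw [heq, ZMod.val_natCast]
  unfold leeDist
  rw [← hv]
  by_cases hcase : v + e < q
  · rw [Nat.mod_eq_of_lt hcase]
    omega
  · have h2 : (v + e) % q = v + e - q := by
      rw [Nat.mod_eq_sub_mod (by omega), Nat.mod_eq_of_lt (by omega)]
    rw [h2]
    omega

lemma maxDist_le_iff (e : ℕ) (x c : Fin 2 → ZMod q) :
    maxDist x c ≤ e ↔ ∀ i, leeDist (x i) (c i) ≤ e := by
  unfold maxDist
  rw [Finset.sup_le_iff]
  simp

/-- shift a codeword to the corner of its square -/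
def shv {q : ℕ} (e : ℕ) (c : Fin 2 → ZMod q) : Fin 2 → ZMod q :=
  fun i => c i - ((e : ℕ) : ZMod q)

omit [NeZero q] in
lemma shv_inj (e : ℕ) : Function.Injective (shv (q := q) e) := by
  intro c c' h
  funext i
  have := congrFun h i
  simpa [shv] using this

lemma perfect_iff_tiling (e : ℕ) (ht : 2 ≤ t) (hq : q = (2 * e + 1) * t)
    (C : Set (Fin 2 → ZMod q)) :
    IsPerfectCode e C ↔ Tiling (2 * e + 1) (shv e '' C) := by
  have hcond : ∀ x c : Fin 2 → ZMod q,
      (maxDist x c ≤ e ↔ Cov (2 * e + 1) (shv e c) x) := by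
    intro x c
    rw [maxDist_le_iff]
    unfold Cov shv
    exact forall_congr' fun i => lee_iff e ht hq (x i) (c i)
  constructor
  · intro hC x
    obtain ⟨c, ⟨hcC, hcd⟩, hu⟩ := hC x
    refine ⟨shv e c, ⟨⟨c, hcC, rfl⟩, (hcond x c).1 hcd⟩, ?_⟩
    rintro a ⟨⟨c', hc'C, rfl⟩, hc'cov⟩
    rw [hu c' ⟨hc'C, (hcond x c').2 hc'cov⟩]
  · intro hT x
    obtain ⟨a, ⟨⟨c, hcC, rfl⟩, hacov⟩, hu⟩ := hT x
    refine ⟨c, ⟨hcC, (hcond x c).2 hacov⟩, ?_⟩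
    rintro c' ⟨hc'C, hc'd⟩
    exact shv_inj e (hu (shv e c') ⟨⟨c', hc'C, rfl⟩, (hcond x c').1 hc'd⟩)

lemma codes_eq_image (e : ℕ) (ht : 2 ≤ t) (hq : q = (2 * e + 1) * t) :
    (Set.image (shv (q := q) e)) '' {C : Set (Fin 2 → ZMod q) | IsPerfectCode e C} =
      {T : Set (Fin 2 → ZMod q) | Tiling (2 * e + 1) T} := by
  ext T
  constructor
  · rintro ⟨C, hC, rfl⟩
    exact (perfect_iff_tiling e ht hq C).1 hC
  · intro hT
    set C : Set (Fin 2 → ZMod q) := (fun c => fun i => c i + ((e : ℕ) : ZMod q)) '' T with hC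
    have himg : shv e '' C = T := by
      rw [hC, Set.image_image]
      have : (fun c : Fin 2 → ZMod q => shv e fun i => c i + ((e : ℕ) : ZMod q)) = id := by
        funext c
        funext i
        simp [shv]
      rw [this, Set.image_id]
    refine ⟨C, ?_, himg⟩
    rw [Set.mem_setOf_eq, perfect_iff_tiling e ht hq C, himg]
    exact hT

end Final
end Stmt4Aux

/-- The number of two-dimensional perfect `e`-codes over `ZMod ((2e+1)t)`. -/
theorem stmt4 (e t q : ℕ) (ht : 2 ≤ t) (hq : q = (2 * e + 1) * t) :
    {C : Set (Fin 2 → ZMod q) | IsPerfectCode e C}.ncard =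
      (2 * e + 1) ^ 2 * (2 * (2 * e + 1) ^ (t - 1) - 1) := by
  haveI : NeZero q := ⟨by rw [hq]; positivity⟩
  have hs : 0 < 2 * e + 1 := by omega
  have h1 : {C : Set (Fin 2 → ZMod q) | IsPerfectCode e C}.ncard =
      {T : Set (Fin 2 → ZMod q) | Stmt4Aux.Tiling (2 * e + 1) T}.ncard := by
    rw [← Stmt4Aux.codes_eq_image e ht hq,
      Set.ncard_image_of_injective _ (Set.image_injective.2 (Stmt4Aux.shv_inj e))]
  rw [h1, Stmt4Aux.count_tilings hs ht hq]
  -- arithmetic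
  set s := 2 * e + 1 with hsdef
  set A := s ^ (t - 1) with hA
  have hpow : s ^ t = A * s := by
    rw [hA, ← pow_succ]
    congr 1
    omega
  have hA1 : 1 ≤ A := Nat.one_le_pow _ _ hs
  rw [hpow]
  have e1 : s ^ 2 * (2 * A - 1) = s ^ 2 * (2 * A) - s ^ 2 * 1 := Nat.mul_sub _ _ _
  have e2 : s ^ 2 * (2 * A) = 2 * (s * (A * s)) := by ring
  have e3 : s ^ 2 * 1 = s * s := by ring
  omega
end

section
/- Let q = (2e+1)·t with integers e ≥ 0 and t ≥ 2, and set d1 = gcd(2e+1, t) and h1 = (2e+1)/d1. For every integer k, the additive subgroup of Z_q^2 generated by (2e+1 mod q, k·h1 mod q) and (0, 2e+1 mod q) is a perfect e-code of type 2. Conversely, every additive subgroup C of Z_q^2 that is a perfect e-code of type 2 equals the additive subgroup generated by (2e+1 mod q, k·h1 mod q) and (0, 2e+1 mod q) for some integer k. -/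
/-- `C ⊆ (ZMod q)^n` is a code of type `i`: translation by `(2e+1)·e_i` preserves `C`. -/
def IsTypeCode {q n : ℕ} (e : ℕ) (C : Set (Fin n → ZMod q)) (i : Fin n) : Prop :=
  ∀ c ∈ C, c + Pi.single i ((2 * e + 1 : ℕ) : ZMod q) ∈ C

/-- `LC_q(e,k)`: the additive subgroup of `(ZMod q)^2` generated by
`(2e+1, k·h1)` and `(0, 2e+1)`, where `h1 = (2e+1)/gcd(2e+1,t)`. -/
def LCcode (q e t : ℕ) (k : ℤ) : AddSubgroup (Fin 2 → ZMod q) :=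
  AddSubgroup.closure
    { ![((2 * e + 1 : ℕ) : ZMod q),
        ((k * (((2 * e + 1) / Nat.gcd (2 * e + 1) t : ℕ) : ℤ) : ℤ) : ZMod q)],
      ![(0 : ZMod q), ((2 * e + 1 : ℕ) : ZMod q)] }

/-!
Write `m = 2e+1`, so `q = m t`. Since `m ∣ q`, the only multiple of `m` in `ZMod q` of Lee weight
`< m` is `0`, while every element lies within Lee distance `e` of a multiple of `m`. A subgroup is a
perfect `e`-code iff it covers and its only element in the cube of radius `2e` is `0`.

For `LCcode` both properties follow from the two facts above, because `t • (m, k h₁)` is a multiple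
of `(0, m)`. Conversely, type 2 puts `(0, m)` in `C`; packing then makes every codeword with first
coordinate `0` a multiple of `(0, m)`, and the codeword covering `(e+1, 0)` is `±(m, s)`. As
`t • (m, s) = (0, t s) ∈ C`, `m ∣ t s`, so `s` is a multiple of `h₁ = m / gcd(m, t)`, and
`(m, s)`, `(0, m)` generate `C`.
-/

section LeeDist

open ZMod

variable {q : ℕ}

lemma leeDist_sub_zero (x y : ZMod q) : leeDist (x - y) 0 = leeDist x y := by
  rw [leeDist, leeDist, sub_zero]

variable [NeZero q]

lemma leeDist_eq_natAbs_valMinAbs (x y : ZMod q) : leeDist x y = (x - y).valMinAbs.natAbs := by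
  rw [valMinAbs_natAbs_eq_min, leeDist]

lemma leeDist_comm (x y : ZMod q) : leeDist x y = leeDist y x := by
  rw [leeDist_eq_natAbs_valMinAbs, leeDist_eq_natAbs_valMinAbs, ← natAbs_valMinAbs_neg, neg_sub]

lemma leeDist_le_natAbs {x y : ZMod q} {z : ℤ} (h : (z : ZMod q) = x - y) :
    leeDist x y ≤ z.natAbs := by
  rw [leeDist_eq_natAbs_valMinAbs]
  exact natAbs_min_of_le_div_two q _ _ (by rw [coe_valMinAbs, h]) (natAbs_valMinAbs_le _)

lemma leeDist_triangle (x y z : ZMod q) : leeDist x z ≤ leeDist x y + leeDist y z := by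
  simp only [leeDist_eq_natAbs_valMinAbs]
  calc (x - z).valMinAbs.natAbs = ((x - y) + (y - z)).valMinAbs.natAbs := by rw [sub_add_sub_cancel]
    _ ≤ ((x - y).valMinAbs + (y - z).valMinAbs).natAbs := natAbs_valMinAbs_add_le _ _
    _ ≤ _ := Int.natAbs_add_le _ _

lemma leeDist_natCast_zero {a : ℕ} (ha : a ≤ q / 2) : leeDist (a : ZMod q) 0 = a := by
  rw [leeDist_eq_natAbs_valMinAbs, sub_zero, valMinAbs_natCast_of_le_half ha, Int.natAbs_natCast]

lemma eq_or_eq_neg_of_leeDist_zero_eq {z : ZMod q} {a : ℕ} (h : leeDist z 0 = a) :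
    z = a ∨ z = -a := by
  rw [leeDist_eq_natAbs_valMinAbs, sub_zero] at h
  rw [← coe_valMinAbs z]
  rcases Int.natAbs_eq_iff.1 h with h | h <;> simp [h]

lemma exists_leeDist_le_of_leeDist_zero_le {z : ZMod q} {e : ℕ} (hz : leeDist z 0 ≤ 2 * e) :
    ∃ y, leeDist y 0 ≤ e ∧ leeDist y z ≤ e := by
  rw [leeDist_eq_natAbs_valMinAbs, sub_zero] at hz
  refine ⟨(z.valMinAbs / 2 : ℤ), (leeDist_le_natAbs (z := z.valMinAbs / 2) ?_).trans ?_,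
    (leeDist_le_natAbs (z := z.valMinAbs / 2 - z.valMinAbs) ?_).trans ?_⟩
  · rw [sub_zero]
  · omega
  · push_cast [coe_valMinAbs]; rfl
  · omega

lemma exists_leeDist_zsmul_le (e : ℕ) (x : ZMod q) :
    ∃ b : ℤ, leeDist x (b • ((2 * e + 1 : ℕ) : ZMod q)) ≤ e := by
  set m : ℤ := 2 * e + 1
  have hm : 0 < m := by positivity
  refine ⟨(x.val + e) / m,
    (leeDist_le_natAbs (z := (x.val + e) % m - e) ?_).trans ?_⟩
  · rw [Int.emod_def, zsmul_eq_mul]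
    push_cast [natCast_zmod_val, m]
    ring
  · have := Int.emod_nonneg (x.val + e : ℤ) hm.ne'
    have := Int.emod_lt_of_pos (x.val + e : ℤ) hm
    omega

lemma eq_zero_of_mem_zmultiples {m : ℕ} (hm : m ∣ q) {z : ZMod q}
    (hz : z ∈ AddSubgroup.zmultiples (m : ZMod q)) (h : leeDist z 0 < m) : z = 0 := by
  obtain ⟨a, rfl⟩ := hz
  have hcast : ((((a • (m : ZMod q)).valMinAbs : ℤ)) : ZMod m) = 0 := by
    have := congrArg (castHom hm (ZMod m)) (coe_valMinAbs (a • (m : ZMod q)))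
    rwa [map_intCast, map_zsmul, map_natCast, natCast_self, smul_zero] at this
  rw [intCast_zmod_eq_zero_iff_dvd] at hcast
  rw [leeDist_eq_natAbs_valMinAbs, sub_zero] at h
  rw [← valMinAbs_eq_zero]
  exact Int.eq_zero_of_dvd_of_natAbs_lt_natAbs hcast (by simpa using h)

end LeeDist

section MaxDist

variable {q n : ℕ}

lemma maxDist_le_iff {x y : Fin n → ZMod q} {r : ℕ} :
    maxDist x y ≤ r ↔ ∀ i, leeDist (x i) (y i) ≤ r := by
  simp [maxDist]

lemma maxDist_le_iff_fin_two {x y : Fin 2 → ZMod q} {r : ℕ} :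
    maxDist x y ≤ r ↔ leeDist (x 0) (y 0) ≤ r ∧ leeDist (x 1) (y 1) ≤ r := by
  rw [maxDist_le_iff, Fin.forall_fin_two]

lemma maxDist_sub_zero (x y : Fin n → ZMod q) : maxDist (x - y) 0 = maxDist x y := by
  simp only [maxDist, Pi.sub_apply, Pi.zero_apply, leeDist_sub_zero]

variable [NeZero q]

lemma maxDist_triangle (x y z : Fin n → ZMod q) : maxDist x z ≤ maxDist x y + maxDist y z :=
  maxDist_le_iff.2 fun i => (leeDist_triangle _ (y i) _).trans <|
    add_le_add (maxDist_le_iff.1 le_rfl i) (maxDist_le_iff.1 le_rfl i)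

lemma maxDist_comm (x y : Fin n → ZMod q) : maxDist x y = maxDist y x := by
  simp only [maxDist, leeDist_comm]

lemma isPerfectCode_iff {e : ℕ} (C : AddSubgroup (Fin n → ZMod q)) :
    IsPerfectCode e (C : Set (Fin n → ZMod q)) ↔
      (∀ x, ∃ c ∈ C, maxDist x c ≤ e) ∧ ∀ c ∈ C, maxDist c 0 ≤ 2 * e → c = 0 := by
  constructor
  · intro hC
    refine ⟨fun x => (hC x).exists, fun c hc hce => ?_⟩
    choose y hy0 hyc using fun i =>
      exists_leeDist_le_of_leeDist_zero_le (maxDist_le_iff.1 hce i)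
    exact (hC y).unique ⟨hc, maxDist_le_iff.2 hyc⟩ ⟨C.zero_mem, maxDist_le_iff.2 hy0⟩
  · rintro ⟨hcover, hpack⟩ x
    obtain ⟨c, hc, hxc⟩ := hcover x
    refine ⟨c, ⟨hc, hxc⟩, fun c' ⟨hc', hxc'⟩ => sub_eq_zero.1 <| hpack _ (C.sub_mem hc' hc) ?_⟩
    rw [maxDist_sub_zero]
    calc maxDist c' c ≤ maxDist c' x + maxDist x c := maxDist_triangle _ _ _
      _ ≤ 2 * e := by rw [maxDist_comm]; omega

end MaxDist

section LCcode

open ZMod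

variable {q e t : ℕ}

lemma Pi.single_one_fin_two {R : Type*} [Zero R] (v : R) : Pi.single (1 : Fin 2) v = ![0, v] := by
  ext i; fin_cases i <;> simp

lemma Nat.mul_div_gcd_comm (m t : ℕ) : t * (m / m.gcd t) = m * (t / m.gcd t) := by
  rw [← Nat.mul_div_assoc t (Nat.gcd_dvd_left _ _), ← Nat.mul_div_assoc _ (Nat.gcd_dvd_right _ _),
    mul_comm]

lemma nsmul_generator_eq_zsmul_generator (hq : q = (2 * e + 1) * t) (k : ℤ) :
    t • ![((2 * e + 1 : ℕ) : ZMod q),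
        ((k * (((2 * e + 1) / Nat.gcd (2 * e + 1) t : ℕ) : ℤ) : ℤ) : ZMod q)] =
      (k * (t / Nat.gcd (2 * e + 1) t : ℕ)) • ![(0 : ZMod q), ((2 * e + 1 : ℕ) : ZMod q)] := by
  have key := congrArg (Nat.cast : ℕ → ZMod q) (Nat.mul_div_gcd_comm (2 * e + 1) t)
  generalize (2 * e + 1) / Nat.gcd (2 * e + 1) t = h at key ⊢
  generalize t / Nat.gcd (2 * e + 1) t = t' at key ⊢
  push_cast at key
  ext i; fin_cases i
  · simp only [Fin.zero_eta, Fin.isValue, Pi.smul_apply, Matrix.cons_val_zero, smul_zero,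
      nsmul_eq_mul]
    rw [← Nat.cast_mul, mul_comm, ← hq, natCast_self]
  · simp only [Nat.cast_add, Nat.cast_mul, Nat.cast_ofNat, Nat.cast_one, Int.cast_mul,
      Int.cast_natCast, Fin.mk_one, Fin.isValue, Pi.smul_apply, Matrix.cons_val_one,
      Matrix.cons_val_fin_one, nsmul_eq_mul, zsmul_eq_mul]
    linear_combination k * key

lemma ZMod.dvd_of_zsmul_natCast_eq_zero {m : ℕ} (hq : q = m * t) (hm : 0 < m) {a : ℤ}
    (h : a • (m : ZMod q) = 0) : (t : ℤ) ∣ a := by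
  rw [zsmul_eq_mul, ← Int.cast_natCast, ← Int.cast_mul, intCast_zmod_eq_zero_iff_dvd, hq,
    Nat.cast_mul, mul_comm a] at h
  exact (mul_dvd_mul_iff_left (by positivity)).1 h

lemma isTypeCode_LCcode (k : ℤ) : IsTypeCode e (LCcode q e t k : Set (Fin 2 → ZMod q)) 1 :=
  fun _ hc => add_mem hc <| by
    rw [Pi.single_one_fin_two]
    exact AddSubgroup.subset_closure (Set.mem_insert_of_mem _ rfl)

variable [NeZero q]

lemma isPerfectCode_LCcode (hq : q = (2 * e + 1) * t) (k : ℤ) :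
    IsPerfectCode e (LCcode q e t k : Set (Fin 2 → ZMod q)) := by
  set M : ZMod q := ((2 * e + 1 : ℕ) : ZMod q)
  set K : ZMod q := ((k * (((2 * e + 1) / Nat.gcd (2 * e + 1) t : ℕ) : ℤ) : ℤ) : ZMod q)
  have hmem (c) : c ∈ LCcode q e t k ↔ ∃ a b : ℤ, a • ![M, K] + b • ![0, M] = c :=
    AddSubgroup.mem_closure_pair
  have hmq : 2 * e + 1 ∣ q := ⟨t, hq⟩
  rw [isPerfectCode_iff]
  constructor
  · intro x
    obtain ⟨a, ha⟩ := exists_leeDist_zsmul_le e (x 0)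
    obtain ⟨b, hb⟩ := exists_leeDist_zsmul_le e (x 1 - a • K)
    refine ⟨_, (hmem _).2 ⟨a, b, rfl⟩, maxDist_le_iff_fin_two.2 ⟨?_, ?_⟩⟩
    · simpa only [Fin.isValue, Pi.add_apply, Pi.smul_apply, Matrix.cons_val_zero, smul_zero,
        add_zero] using ha
    · rw [← leeDist_sub_zero] at hb ⊢
      convert hb using 2
      simp only [Fin.isValue, Pi.add_apply, Pi.smul_apply, Matrix.cons_val_one,
        Matrix.cons_val_fin_one]
      abel
  · intro c hc hce
    obtain ⟨a, b, rfl⟩ := (hmem c).1 hc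
    have ha : a • M = 0 := eq_zero_of_mem_zmultiples hmq ⟨a, rfl⟩ <| Nat.lt_succ_of_le <| by
      simpa only [Fin.isValue, Pi.add_apply, Pi.smul_apply, Matrix.cons_val_zero, smul_zero,
        add_zero, Pi.zero_apply] using (maxDist_le_iff_fin_two.1 hce).1
    obtain ⟨u, rfl⟩ := dvd_of_zsmul_natCast_eq_zero hq (by omega) ha
    rw [mul_comm, mul_zsmul, natCast_zsmul, nsmul_generator_eq_zsmul_generator hq, ← mul_zsmul,
      ← add_smul] at hce ⊢
    generalize u * (k * (t / Nat.gcd (2 * e + 1) t : ℕ)) + b = j at hce ⊢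
    have hj : j • M = 0 := eq_zero_of_mem_zmultiples hmq ⟨j, rfl⟩ <| Nat.lt_succ_of_le <| by
      simpa only [Fin.isValue, Pi.smul_apply, Matrix.cons_val_one, Matrix.cons_val_fin_one,
        Pi.zero_apply] using (maxDist_le_iff_fin_two.1 hce).2
    ext i; fin_cases i
    · simp
    · exact hj

end LCcode

lemma ZMod.exists_eq_intCast_mul_div_gcd {q m t : ℕ} [NeZero q] (hq : q = m * t) (hm : 0 < m)
    {s : ZMod q} (h : t • s ∈ AddSubgroup.zmultiples (m : ZMod q)) :
    ∃ k : ℤ, s = ((k * ((m / m.gcd t : ℕ) : ℤ) : ℤ) : ZMod q) := by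
  obtain ⟨b, hb⟩ := h
  have hmod : t * s.val ≡ t * 0 [MOD m] := by
    have := congrArg (castHom (⟨t, hq⟩ : m ∣ q) (ZMod m)) hb
    rw [map_zsmul, map_natCast, natCast_self, smul_zero, map_nsmul, castHom_apply,
      cast_eq_val] at this
    rw [← natCast_eq_natCast_iff, Nat.cast_mul, ← nsmul_eq_mul, ← this, mul_zero, Nat.cast_zero]
  obtain ⟨k, hk⟩ := Nat.modEq_zero_iff_dvd.1 (hmod.cancel_left_div_gcd hm)
  refine ⟨k, ?_⟩
  rw [← natCast_zmod_val s, hk, Nat.cast_mul, Int.cast_mul, Int.cast_natCast, Int.cast_natCast,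
    mul_comm]

section Classification

open ZMod

variable {q e : ℕ} {C : AddSubgroup (Fin 2 → ZMod q)}

lemma mem_of_isTypeCode_one (hT : IsTypeCode e (C : Set (Fin 2 → ZMod q)) 1) :
    ![0, ((2 * e + 1 : ℕ) : ZMod q)] ∈ C := by
  simpa only [zero_add, Pi.single_one_fin_two, SetLike.mem_coe] using hT 0 C.zero_mem

variable [NeZero q]

lemma exists_eq_zsmul_of_leeDist_fst_le (hg : ![0, ((2 * e + 1 : ℕ) : ZMod q)] ∈ C)
    (hpack : ∀ c ∈ C, maxDist c 0 ≤ 2 * e → c = 0) {c : Fin 2 → ZMod q} (hc : c ∈ C)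
    (h0 : leeDist (c 0) 0 ≤ 2 * e) : ∃ b : ℤ, c = b • ![0, ((2 * e + 1 : ℕ) : ZMod q)] := by
  obtain ⟨b, hb⟩ := exists_leeDist_zsmul_le e (c 1)
  refine ⟨b, sub_eq_zero.1 <| hpack _ (C.sub_mem hc (C.zsmul_mem hg b)) <|
    maxDist_le_iff_fin_two.2 ⟨?_, ?_⟩⟩
  · simpa using h0
  · rw [Pi.sub_apply, Pi.zero_apply, leeDist_sub_zero]
    exact hb.trans (by omega)

lemma exists_mem_fst_eq (hmq : 2 * (2 * e + 1) ≤ q) (hcover : ∀ x, ∃ c ∈ C, maxDist x c ≤ e)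
    (hfst : ∀ c ∈ C, leeDist (c 0) 0 ≤ 2 * e → c 0 = 0) :
    ∃ c ∈ C, c 0 = ((2 * e + 1 : ℕ) : ZMod q) := by
  obtain ⟨c, hc, hxc⟩ := hcover ![((e + 1 : ℕ) : ZMod q), 0]
  have hxc0 : leeDist ((e + 1 : ℕ) : ZMod q) (c 0) ≤ e := (maxDist_le_iff_fin_two.1 hxc).1
  have hfar : leeDist ((e + 1 : ℕ) : ZMod q) 0 = e + 1 := leeDist_natCast_zero (by omega)
  have hlarge : ¬ leeDist (c 0) 0 ≤ 2 * e := fun h => by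
    rw [hfst c hc h] at hxc0
    omega
  have hle : leeDist (c 0) 0 ≤ 2 * e + 1 := by
    have := leeDist_triangle (c 0) ((e + 1 : ℕ) : ZMod q) 0
    rw [leeDist_comm] at hxc0
    omega
  rcases eq_or_eq_neg_of_leeDist_zero_eq (z := c 0) (a := 2 * e + 1) (by omega) with h | h
  · exact ⟨c, hc, h⟩
  · exact ⟨-c, C.neg_mem hc, by rw [Pi.neg_apply, h, neg_neg]⟩

lemma fst_mem_zmultiples {cM : Fin 2 → ZMod q} (hcM : cM ∈ C)
    (hcM0 : cM 0 = ((2 * e + 1 : ℕ) : ZMod q))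
    (hfst : ∀ c ∈ C, leeDist (c 0) 0 ≤ 2 * e → c 0 = 0) {c : Fin 2 → ZMod q} (hc : c ∈ C) :
    c 0 ∈ AddSubgroup.zmultiples ((2 * e + 1 : ℕ) : ZMod q) := by
  obtain ⟨b, hb⟩ := exists_leeDist_zsmul_le e (c 0)
  have := hfst _ (C.sub_mem hc (C.zsmul_mem hcM b)) <| by
    rw [Pi.sub_apply, Pi.smul_apply, hcM0, leeDist_sub_zero]
    omega
  rw [Pi.sub_apply, Pi.smul_apply, hcM0, sub_eq_zero] at this
  exact ⟨b, this.symm⟩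

lemma exists_eq_LCcode_of_isPerfectCode {t : ℕ} (ht : 2 ≤ t) (hq : q = (2 * e + 1) * t)
    (hP : IsPerfectCode e (C : Set (Fin 2 → ZMod q)))
    (hT : IsTypeCode e (C : Set (Fin 2 → ZMod q)) 1) : ∃ k : ℤ, C = LCcode q e t k := by
  obtain ⟨hcover, hpack⟩ := (isPerfectCode_iff C).1 hP
  have hg := mem_of_isTypeCode_one hT
  have hzero : leeDist (0 : ZMod q) 0 ≤ 2 * e := by simp [leeDist]
  have hfst (c) (hc : c ∈ C) (h : leeDist (c 0) 0 ≤ 2 * e) : c 0 = 0 := by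
    obtain ⟨b, rfl⟩ := exists_eq_zsmul_of_leeDist_fst_le hg hpack hc h
    simp
  have hsnd (c) (hc : c ∈ C) (h0 : c 0 = 0) :
      c 1 ∈ AddSubgroup.zmultiples ((2 * e + 1 : ℕ) : ZMod q) := by
    obtain ⟨b, rfl⟩ := exists_eq_zsmul_of_leeDist_fst_le hg hpack hc (h0 ▸ hzero)
    exact ⟨b, rfl⟩
  obtain ⟨cM, hcM, hcM0⟩ := exists_mem_fst_eq (by rw [hq]; nlinarith) hcover hfst
  obtain ⟨k, hk⟩ := exists_eq_intCast_mul_div_gcd hq (by omega) <|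
    hsnd _ (C.nsmul_mem hcM t) <| by
      rw [Pi.smul_apply, hcM0, nsmul_eq_mul, ← Nat.cast_mul, mul_comm, ← hq, natCast_self]
  have hcM_eq : cM = ![((2 * e + 1 : ℕ) : ZMod q),
      ((k * (((2 * e + 1) / Nat.gcd (2 * e + 1) t : ℕ) : ℤ) : ℤ) : ZMod q)] := by
    ext i; fin_cases i
    exacts [hcM0, hk]
  refine ⟨k, le_antisymm (fun c hc => ?_) ((AddSubgroup.closure_le C).2 ?_)⟩
  · obtain ⟨a, ha⟩ := fst_mem_zmultiples hcM hcM0 hfst hc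
    have h0 : (c - a • cM) 0 = 0 := by rw [Pi.sub_apply, Pi.smul_apply, hcM0, ← ha, sub_self]
    obtain ⟨b, hb⟩ := exists_eq_zsmul_of_leeDist_fst_le hg hpack
      (C.sub_mem hc (C.zsmul_mem hcM a)) (h0 ▸ hzero)
    refine AddSubgroup.mem_closure_pair.2 ⟨a, b, ?_⟩
    rw [← hcM_eq, ← hb]
    abel
  · rw [Set.insert_subset_iff, Set.singleton_subset_iff]
    exact ⟨hcM_eq ▸ hcM, hg⟩

end Classification

/-- Generator description of two-dimensional linear perfect codes of type 2. -/
theorem stmt5 (e t q : ℕ) (ht : 2 ≤ t) (hq : q = (2 * e + 1) * t) :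
    (∀ k : ℤ, IsPerfectCode e (LCcode q e t k : Set (Fin 2 → ZMod q)) ∧
      IsTypeCode e (LCcode q e t k : Set (Fin 2 → ZMod q)) 1) ∧
    (∀ C : AddSubgroup (Fin 2 → ZMod q),
      IsPerfectCode e (C : Set (Fin 2 → ZMod q)) →
      IsTypeCode e (C : Set (Fin 2 → ZMod q)) 1 →
      ∃ k : ℤ, C = LCcode q e t k) := by
  have : NeZero q := ⟨by rw [hq]; positivity⟩
  exact ⟨fun k => ⟨isPerfectCode_LCcode hq k, isTypeCode_LCcode k⟩,
    fun C hP hT => exists_eq_LCcode_of_isPerfectCode ht hq hP hT⟩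
end

section
/- Let q = (2e+1)·t with integers e ≥ 0 and t ≥ 2, let k be an integer, and set h2 = gcd(2e+1,t) / gcd(2e+1,t,k). Then the code LC_q(e,k) is isomorphic as an additive group to ZMod(t/h2) × ZMod(t·h2). -/
theorem auxiso (q' g' th2 : ℕ) [NeZero q'] [NeZero g'] [NeZero th2]
    (m kh1 s r K' h2' : ℤ)
    (hI2 : s * h2' + r * K' = 1)
    (hiff : ∀ a b : ℤ,
      ((q' : ℤ) ∣ a * m ∧ (q' : ℤ) ∣ a * kh1 + b * m) ↔
      ((g' : ℤ) ∣ s * a - r * b ∧ (th2 : ℤ) ∣ K' * a + h2' * b)) :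
    Nonempty ((AddSubgroup.closure
        {![(m : ZMod q'), (kh1 : ZMod q')], ![(0 : ZMod q'), (m : ZMod q')]} :
        AddSubgroup (Fin 2 → ZMod q')) ≃+ ZMod g' × ZMod th2) := by
  set v1 : Fin 2 → ZMod q' := ![(m : ZMod q'), (kh1 : ZMod q')] with hv1
  set v2 : Fin 2 → ZMod q' := ![(0 : ZMod q'), (m : ZMod q')] with hv2
  let φ : ℤ × ℤ →+ (Fin 2 → ZMod q') :=
    AddMonoidHom.mk' (fun p => p.1 • v1 + p.2 • v2) (by
      intro p p'
      simp only [Prod.fst_add, Prod.snd_add, add_zsmul]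
      abel)
  let ψ : ℤ × ℤ →+ ZMod g' × ZMod th2 :=
    AddMonoidHom.mk' (fun p => (((s * p.1 - r * p.2 : ℤ) : ZMod g'),
        ((K' * p.1 + h2' * p.2 : ℤ) : ZMod th2))) (by
      intro p p'
      simp only [Prod.fst_add, Prod.snd_add, Prod.mk_add_mk, Prod.mk.injEq]
      constructor <;> · push_cast; ring)
  have hrange : φ.range = AddSubgroup.closure {v1, v2} := by
    apply le_antisymm
    · rintro w ⟨p, rfl⟩
      exact AddSubgroup.add_mem _
        (AddSubgroup.zsmul_mem _ (AddSubgroup.subset_closure (by simp)) _)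
        (AddSubgroup.zsmul_mem _ (AddSubgroup.subset_closure (by simp)) _)
    · rw [AddSubgroup.closure_le]
      rintro w (rfl | rfl)
      · exact ⟨(1, 0), by
          simp only [φ, AddMonoidHom.mk'_apply, one_zsmul, zero_zsmul, add_zero]⟩
      · exact ⟨(0, 1), by
          simp only [φ, AddMonoidHom.mk'_apply, one_zsmul, zero_zsmul, zero_add]⟩
  have hker : ∀ p : ℤ × ℤ, φ p = 0 ↔ ψ p = 0 := by
    rintro ⟨a, b⟩
    have h1 : φ (a, b) = 0 ↔
        ((q' : ℤ) ∣ a * m ∧ (q' : ℤ) ∣ a * kh1 + b * m) := by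
      rw [funext_iff, Fin.forall_fin_two]
      simp only [φ, AddMonoidHom.mk'_apply, Pi.add_apply, Pi.smul_apply, hv1, hv2,
        Matrix.cons_val_zero, Matrix.cons_val_one, Matrix.head_cons, Pi.zero_apply,
        smul_zero, add_zero]
      simp only [zsmul_eq_mul]
      rw [show ((a : ZMod q') * m = ((a * m : ℤ) : ZMod q')) by push_cast; ring,
        show ((a : ZMod q') * kh1 + (b : ZMod q') * m = ((a * kh1 + b * m : ℤ) : ZMod q')) by
          push_cast; ring,
        ZMod.intCast_zmod_eq_zero_iff_dvd, ZMod.intCast_zmod_eq_zero_iff_dvd]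
    have h2 : ψ (a, b) = 0 ↔
        ((g' : ℤ) ∣ s * a - r * b ∧ (th2 : ℤ) ∣ K' * a + h2' * b) := by
      simp only [ψ, AddMonoidHom.mk'_apply, Prod.mk_eq_zero,
        ZMod.intCast_zmod_eq_zero_iff_dvd]
    rw [h1, h2, hiff]
  have hkereq : φ.ker = ψ.ker := by
    ext p
    simp only [AddMonoidHom.mem_ker, hker p]
  have hsurj : Function.Surjective ψ := by
    rintro ⟨x, y⟩
    obtain ⟨x', rfl⟩ := ZMod.intCast_surjective x
    obtain ⟨y', rfl⟩ := ZMod.intCast_surjective y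
    refine ⟨(h2' * x' + r * y', -K' * x' + s * y'), ?_⟩
    have e1 : s * (h2' * x' + r * y') - r * (-K' * x' + s * y') = x' := by
      linear_combination x' * hI2
    have e2 : K' * (h2' * x' + r * y') + h2' * (-K' * x' + s * y') = y' := by
      linear_combination y' * hI2
    simp only [ψ, AddMonoidHom.mk'_apply, e1, e2]
  have E2 : (ℤ × ℤ) ⧸ φ.ker ≃+ ZMod g' × ZMod th2 :=
    hkereq ▸ QuotientAddGroup.quotientKerEquivOfSurjective ψ hsurj
  rw [show (AddSubgroup.closure {v1, v2}) = φ.range from hrange.symm]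
  exact ⟨(QuotientAddGroup.quotientKerEquivRange φ).symm.trans E2⟩

/-- Group structure of `LC_q(e,k)`: it is isomorphic to `ZMod (t/h2) × ZMod (t·h2)`
where `h2 = gcd(2e+1,t)/gcd(2e+1,t,k)`. -/
theorem stmt6 (e t q : ℕ) (ht : 2 ≤ t) (hq : q = (2 * e + 1) * t) (k : ℤ) :
    Nonempty ((LCcode q e t k) ≃+
      (ZMod (t / (Nat.gcd (2 * e + 1) t / Nat.gcd (Nat.gcd (2 * e + 1) t) k.natAbs)) ×
       ZMod (t * (Nat.gcd (2 * e + 1) t / Nat.gcd (Nat.gcd (2 * e + 1) t) k.natAbs)))) := by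
  set M : ℕ := 2 * e + 1 with hM
  set d : ℕ := Nat.gcd M t with hd
  set d2 : ℕ := Nat.gcd d k.natAbs with hd2
  set h2 : ℕ := d / d2 with hh2
  set g' : ℕ := t / h2 with hg'
  set c : ℕ := t / d with hc
  set h1 : ℕ := M / d with hh1
  have hMpos : 0 < M := by positivity
  have htpos : 0 < t := by omega
  have hdM : d ∣ M := Nat.gcd_dvd_left _ _
  have hdt : d ∣ t := Nat.gcd_dvd_right _ _
  have hdpos : 0 < d := Nat.gcd_pos_of_pos_left _ hMpos
  have hd2d : d2 ∣ d := Nat.gcd_dvd_left _ _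
  have hd2pos : 0 < d2 := Nat.gcd_pos_of_pos_left _ hdpos
  have hh2pos : 0 < h2 := Nat.div_pos (Nat.le_of_dvd hdpos hd2d) hd2pos
  have hh2d : h2 ∣ d := Nat.div_dvd_of_dvd hd2d
  have hh2t : h2 ∣ t := hh2d.trans hdt
  have hg'pos : 0 < g' := Nat.div_pos (Nat.le_of_dvd htpos hh2t) hh2pos
  have h1pos : 0 < h1 := Nat.div_pos (Nat.le_of_dvd hMpos hdM) hdpos
  have hcpos : 0 < c := Nat.div_pos (Nat.le_of_dvd htpos hdt) hdpos
  have hqpos : 0 < q := by rw [hq]; positivity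
  haveI : NeZero q := ⟨hqpos.ne'⟩
  haveI : NeZero g' := ⟨hg'pos.ne'⟩
  haveI : NeZero (t * h2) := ⟨by positivity⟩
  have em' : d * h1 = M := Nat.mul_div_cancel' hdM
  have et' : d * c = t := Nat.mul_div_cancel' hdt
  have ed' : d2 * h2 = d := Nat.mul_div_cancel' hd2d
  have et2' : h2 * g' = t := Nat.mul_div_cancel' hh2t
  have eg' : g' = c * d2 := by
    have h : t = (c * d2) * h2 := by rw [mul_assoc, ed', mul_comm, et']
    rw [hg', h, Nat.mul_div_cancel _ hh2pos]
  have em : (M : ℤ) = (d : ℤ) * h1 := by exact_mod_cast em'.symm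
  have et : (t : ℤ) = (d : ℤ) * c := by exact_mod_cast et'.symm
  have ed : (d : ℤ) = (d2 : ℤ) * h2 := by exact_mod_cast ed'.symm
  have et2 : (t : ℤ) = (h2 : ℤ) * g' := by exact_mod_cast et2'.symm
  have eg : (g' : ℤ) = (c : ℤ) * d2 := by exact_mod_cast eg'
  have eq' : (q : ℤ) = (M : ℤ) * t := by exact_mod_cast hq
  have et3 : (t : ℤ) = (c : ℤ) * d2 * h2 := by rw [et, ed]; ring
  have hd2k : (d2 : ℤ) ∣ k :=
    Int.dvd_natAbs.mp (Int.natCast_dvd_natCast.mpr (Nat.gcd_dvd_right d k.natAbs))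
  set K' : ℤ := k / (d2 : ℤ) with hK'
  have E4 : (k : ℤ) = (d2 : ℤ) * K' := (Int.mul_ediv_cancel' hd2k).symm
  have hgcd : Int.gcd (t : ℤ) ((c : ℤ) * k) = g' := by
    have h1n : ((c : ℤ) * k).natAbs = c * k.natAbs := by
      rw [Int.natAbs_mul, Int.natAbs_natCast]
    have h2n : ((t : ℤ)).natAbs = t := Int.natAbs_natCast t
    unfold Int.gcd
    rw [h1n, h2n, show t = c * d from by rw [mul_comm]; exact et'.symm,
      Nat.gcd_mul_left, ← hd2, eg']
  set s : ℤ := Int.gcdA (t : ℤ) ((c : ℤ) * k) with hs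
  set r : ℤ := Int.gcdB (t : ℤ) ((c : ℤ) * k) with hr
  have I1 : (g' : ℤ) = (t : ℤ) * s + (c : ℤ) * k * r := by
    have h := Int.gcd_eq_gcd_ab (t : ℤ) ((c : ℤ) * k)
    rw [hgcd] at h
    linear_combination h
  have hcd2ne : ((c : ℤ) * d2) ≠ 0 := by positivity
  have I2 : s * (h2 : ℤ) + r * K' = 1 := by
    apply mul_left_cancel₀ hcd2ne
    calc (c : ℤ) * d2 * (s * h2 + r * K') = (t : ℤ) * s + (c : ℤ) * k * r := by
          rw [et3, E4]; ring
      _ = (g' : ℤ) := I1.symm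
      _ = (c : ℤ) * d2 * 1 := by rw [eg]; ring
  have hiff : ∀ a b : ℤ,
      ((q : ℤ) ∣ a * (M : ℤ) ∧ (q : ℤ) ∣ a * (k * (h1 : ℤ)) + b * (M : ℤ)) ↔
      ((g' : ℤ) ∣ s * a - r * b ∧ ((t * h2 : ℕ) : ℤ) ∣ K' * a + (h2 : ℤ) * b) := by
    intro a b
    have tc : ((t * h2 : ℕ) : ℤ) = (t : ℤ) * h2 := by push_cast; ring
    rw [tc]
    constructor
    · rintro ⟨⟨w, hw⟩, ⟨w2, hw2⟩⟩
      have ha : a = (t : ℤ) * w := by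
        apply mul_right_cancel₀ (show (M : ℤ) ≠ 0 by positivity)
        linear_combination hw + w * eq'
      have hb : b = (t : ℤ) * w2 - (c : ℤ) * k * w := by
        apply mul_left_cancel₀ (show ((d : ℤ) * h1) ≠ 0 by positivity)
        rw [eq', em] at hw2
        rw [et] at hw2 ha ⊢
        linear_combination hw2 - (k * (h1 : ℤ)) * ha
      constructor
      · refine ⟨w - r * h2 * w2, ?_⟩
        rw [ha, hb]
        linear_combination (-w) * I1 - (r * w2) * et2
      · refine ⟨w2, ?_⟩
        rw [ha, hb]
        linear_combination (w * K') * et3 - (w * h2 * c) * E4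
    · rintro ⟨⟨x, hx⟩, ⟨y, hy⟩⟩
      have ha2 : a = (t : ℤ) * (x + r * h2 * y) := by
        linear_combination (h2 : ℤ) * hx + r * hy - a * I2 - x * et2
      have hb2 : b = (t : ℤ) * h2 * s * y - K' * g' * x := by
        linear_combination (-K') * hx + s * hy - b * I2
      constructor
      · exact ⟨x + r * h2 * y, by rw [ha2, eq']; ring⟩
      · refine ⟨y, ?_⟩
        rw [ha2, hb2, eq', em, ed, E4, et3, eg]
        linear_combination ((c : ℤ) * d2 * h2 * h2 * d2 * h1 * y) * I2
  have hLC : LCcode q e t k = AddSubgroup.closure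
      {![(((M : ℕ) : ℤ) : ZMod q), ((k * (h1 : ℤ) : ℤ) : ZMod q)],
        ![(0 : ZMod q), (((M : ℕ) : ℤ) : ZMod q)]} := by
    unfold LCcode
    simp only [hh1, hd, hM, Int.cast_natCast]
  rw [hLC]
  exact auxiso q g' (t * h2) ((M : ℕ) : ℤ) (k * (h1 : ℤ)) s r K' (h2 : ℤ) I2 hiff
end
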